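/- arXiv:2105.04930 — 5 statements merged into one kernel-verified Lean document; each statement's English description precedes it below -/
import Mathlib

section
/- Completion-of-square identity and uniqueness for the Riccati-type equation. Let (Q_j)_{j∈ℕ⁺} ∈ M_{ħ,≫}(H) and (R_j)_{j∈ℕ⁺} ∈ M_{ħ,≫}(U), and let {P̃_ℓ}_{ℓ=0}^{ħ} ⊂ SL_+(H) be any solution of the periodic Riccati-type equation. For k ∈ ℕ⁺ write G_k := R_k + B_{ν(k)}* P̃_{ν(k)} B_{ν(k)} (coercive, hence boundedly invertible). Then for every ℓ ∈ {0,1,…,ħ}, every x_0 ∈ H and every u = (u_{j+ℓ})_{j∈ℕ⁺} ∈ U_ad(x_0;ℓ), writing x(t_k) := x(t_k;x_0,u,ℓ): J(u;x_0,ℓ) = ⟨P̃_ℓ x_0, x_0⟩_H + Σ_{k=ℓ+1}^{∞} ‖G_k^{1/2}(u_k + G_k^{−1} B_{ν(k)}* P̃_{ν(k)} x(t_k))‖_U². Moreover the feedback control u* defined by u*_k := −G_k^{−1} B_{ν(k)}* P̃_{ν(k)} x(t_k;x_0,u*,ℓ) belongs to U_ad(x_0;ℓ) and satisfies J(u*;x_0,ℓ)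 = ⟨P̃_ℓ x_0, x_0⟩_H; consequently V(x_0;ℓ) = ⟨P̃_ℓ x_0, x_0⟩_H for all x_0 ∈ H, and the periodic Riccati-type equation has at most one solution. -/
open scoped RealInnerProductSpace
noncomputable section

namespace ImpulseControl

/-- adjoint of a continuous linear map between real Hilbert spaces -/
def adj {E F : Type*} [NormedAddCommGroup E] [InnerProductSpace ℝ E] [CompleteSpace E]
    [NormedAddCommGroup F] [InnerProductSpace ℝ F] [CompleteSpace F]
    (f : E →L[ℝ] F) : F →L[ℝ] E :=
  ContinuousLinearMap.adjoint f

/-- `ν(j) = j - [j/ħ]·ħ ∈ {1,…,ħ}` (where `[s] = max {k ∈ ℕ : k < s}`):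
equals `ħ` when `ħ ∣ j`, else `j % ħ`. -/
def nu (hbar j : ℕ) : ℕ := if j % hbar = 0 then hbar else j % hbar

variable {H U : Type*} [NormedAddCommGroup H] [InnerProductSpace ℝ H] [CompleteSpace H]
  [NormedAddCommGroup U] [InnerProductSpace ℝ U] [CompleteSpace U]

/-- a bounded self-adjoint nonnegative operator: membership in `SL₊` -/
def IsNonnegOp {E : Type*} [NormedAddCommGroup E] [InnerProductSpace ℝ E] [CompleteSpace E]
    (P : E →L[ℝ] E) : Prop :=
  IsSelfAdjoint P ∧ ∀ x : E, 0 ≤ ⟪P x, x⟫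

/-- membership in `SL_≫`: self-adjoint, nonnegative and coercive -/
def IsCoerciveOp {E : Type*} [NormedAddCommGroup E] [InnerProductSpace ℝ E] [CompleteSpace E]
    (P : E →L[ℝ] E) : Prop :=
  IsNonnegOp P ∧ ∃ δ : ℝ, 0 < δ ∧ ∀ x : E, δ * ‖x‖ ^ 2 ≤ ⟪P x, x⟫

/-- `M_{ħ,+}`: an `ħ`-periodic sequence of self-adjoint nonnegative operators (indices `j ≥ 1`). -/
def MemMPlus {E : Type*} [NormedAddCommGroup E] [InnerProductSpace ℝ E] [CompleteSpace E]
    (hbar : ℕ) (Q : ℕ → E →L[ℝ] E) : Prop :=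
  (∀ j : ℕ, 1 ≤ j → IsNonnegOp (Q j)) ∧ ∀ j : ℕ, 1 ≤ j → Q (j + hbar) = Q j

/-- `M_{ħ,≫}`: an `ħ`-periodic sequence of self-adjoint coercive operators (indices `j ≥ 1`). -/
def MemMCoercive {E : Type*} [NormedAddCommGroup E] [InnerProductSpace ℝ E] [CompleteSpace E]
    (hbar : ℕ) (Q : ℕ → E →L[ℝ] E) : Prop :=
  (∀ j : ℕ, 1 ≤ j → IsCoerciveOp (Q j)) ∧ ∀ j : ℕ, 1 ≤ j → Q (j + hbar) = Q j

section Defs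

variable (T : ℝ → H →L[ℝ] H) (t : ℕ → ℝ) (hbar : ℕ) (B : ℕ → U →L[ℝ] H)

/-- post-impulse states: `xplusFrom T t ħ B ℓ x0 u m = x(t_{ℓ+m}^+ ; x0, u, ℓ)`. -/
def xplusFrom (ℓ : ℕ) (x0 : H) (u : ℕ → U) : ℕ → H
  | 0 => x0
  | m + 1 => T (t (ℓ + m + 1) - t (ℓ + m)) (xplusFrom ℓ x0 u m)
      + B (nu hbar (ℓ + m + 1)) (u (ℓ + m + 1))

/-- pre-impulse states: `xtrajFrom T t ħ B ℓ x0 u m = x(t_{ℓ+m} ; x0, u, ℓ)` for `m ≥ 1`. -/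
def xtrajFrom (ℓ : ℕ) (x0 : H) (u : ℕ → U) : ℕ → H
  | 0 => x0
  | m + 1 => T (t (ℓ + m + 1) - t (ℓ + m)) (xplusFrom T t hbar B ℓ x0 u m)

/-- `x(t_j^+ ; x0, u)` -/
def xplus (x0 : H) (u : ℕ → U) : ℕ → H := xplusFrom T t hbar B 0 x0 u

/-- `x(t_j ; x0, u)` for `j ≥ 1` -/
def xtraj (x0 : H) (u : ℕ → U) : ℕ → H := xtrajFrom T t hbar B 0 x0 u

/-- the shifted admissible control set `U_ad(x0; ℓ)`; `U_ad(x0) = UadFrom T t ħ B 0 x0` -/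
def UadFrom (ℓ : ℕ) (x0 : H) : Set (ℕ → U) :=
  {u | Summable (fun j : ℕ => ‖u (ℓ + j + 1)‖ ^ 2) ∧
       Summable (fun j : ℕ => ‖xtrajFrom T t hbar B ℓ x0 u (j + 1)‖ ^ 2)}

/-- exponential `ħ`-stabilizability of `[A, B_ħ, Λ_ħ]` by an `ħ`-periodic feedback law:
every closed-loop trajectory decays like `C e^{-μ t}`. -/
def ExpStabilizable : Prop :=
  ∃ F : ℕ → H →L[ℝ] U, ∃ C μ : ℝ, 0 < C ∧ 0 < μ ∧
    ∀ (x0 : H) (u : ℕ → U),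
      (∀ j : ℕ, 1 ≤ j → u j = F (nu hbar j) (xtraj T t hbar B x0 u j)) →
      ∀ (j : ℕ) (s : ℝ), t j < s → s ≤ t (j + 1) →
        ‖T (s - t j) (xplus T t hbar B x0 u j)‖ ≤ C * Real.exp (-μ * s) * ‖x0‖

/-- the infinite-horizon cost `J(u; x0, ℓ)` -/
def Jinf (Q : ℕ → H →L[ℝ] H) (R : ℕ → U →L[ℝ] U) (ℓ : ℕ) (x0 : H) (u : ℕ → U) : ℝ :=
  ∑' m : ℕ,
    (⟪Q (ℓ + m + 1) (xtrajFrom T t hbar B ℓ x0 u (m + 1)), xtrajFrom T t hbar B ℓ x0 u (m + 1)⟫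
      + ⟪R (ℓ + m + 1) (u (ℓ + m + 1)), u (ℓ + m + 1)⟫)

/-- the infinite-horizon value function `V(x0; ℓ)` -/
def Vinf (Q : ℕ → H →L[ℝ] H) (R : ℕ → U →L[ℝ] U) (ℓ : ℕ) (x0 : H) : ℝ :=
  sInf {c : ℝ | ∃ u ∈ UadFrom T t hbar B ℓ x0, c = Jinf T t hbar B Q R ℓ x0 u}

/-- the finite-horizon cost `J(u; x0, ℓ, k̂)` with terminal weight `M` -/
def Jfin (Q : ℕ → H →L[ℝ] H) (R : ℕ → U →L[ℝ] U) (M : H →L[ℝ] H)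
    (ℓ khat : ℕ) (x0 : H) (u : ℕ → U) : ℝ :=
  (∑ m ∈ Finset.Icc 1 (khat - ℓ),
    (⟪Q (ℓ + m) (xtrajFrom T t hbar B ℓ x0 u m), xtrajFrom T t hbar B ℓ x0 u m⟫
      + ⟪R (ℓ + m) (u (ℓ + m)), u (ℓ + m)⟫))
  + ⟪M (xplusFrom T t hbar B ℓ x0 u (khat - ℓ)), xplusFrom T t hbar B ℓ x0 u (khat - ℓ)⟫

/-- the finite-horizon value function `V(x0; ℓ, k̂)` with terminal weight `M` -/
def Vfin (Q : ℕ → H →L[ℝ] H) (R : ℕ → U →L[ℝ] U) (M : H →L[ℝ] H)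
    (ℓ khat : ℕ) (x0 : H) : ℝ :=
  sInf {c : ℝ | ∃ u : ℕ → U, Summable (fun j : ℕ => ‖u (ℓ + j + 1)‖ ^ 2) ∧
    c = Jfin T t hbar B Q R M ℓ khat x0 u}

/-- the `k`-th equation of the periodic Riccati-type system, where `G` is the (two-sided)
inverse of `R_k + B_k* P_k B_k`. -/
def RicEq (Q : ℕ → H →L[ℝ] H) (R : ℕ → U →L[ℝ] U) (P : ℕ → H →L[ℝ] H)
    (G : U →L[ℝ] U) (k : ℕ) : Prop :=
  G ∘L (R k + adj (B k) ∘L P k ∘L B k) = 1 ∧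
  (R k + adj (B k) ∘L P k ∘L B k) ∘L G = 1 ∧
  P (k - 1) - adj (T (t k - t (k - 1))) ∘L P k ∘L T (t k - t (k - 1)) =
    adj (T (t k - t (k - 1))) ∘L Q k ∘L T (t k - t (k - 1))
      - adj (T (t k - t (k - 1))) ∘L P k ∘L B k ∘L G ∘L adj (B k) ∘L P k
          ∘L T (t k - t (k - 1))

/-- `P_0, …, P_ħ` is a solution of the periodic Riccati-type equation. -/
def IsRicSol (Q : ℕ → H →L[ℝ] H) (R : ℕ → U →L[ℝ] U) (P : ℕ → H →L[ℝ] H) : Prop :=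
  (∀ k : ℕ, k ≤ hbar → IsNonnegOp (P k)) ∧ P 0 = P hbar ∧
  ∀ k : ℕ, 1 ≤ k → k ≤ hbar → ∃ G : U →L[ℝ] U, RicEq T t B Q R P G k

end Defs

section Aux
open Filter

-- ===== auxiliary lemmas (chunk1/2, assumed proved) =====
lemma nu_pos {hbar : ℕ} (h : 0 < hbar) (j : ℕ) : 1 ≤ nu hbar j := by
  unfold nu; split <;> omega

lemma nu_le {hbar : ℕ} (h : 0 < hbar) (j : ℕ) : nu hbar j ≤ hbar := by
  have := Nat.mod_lt j h
  unfold nu; split <;> omega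

lemma nu_eq_self {hbar k : ℕ} (h1 : 1 ≤ k) (h2 : k ≤ hbar) : nu hbar k = k := by
  rcases eq_or_lt_of_le h2 with rfl | hlt
  · simp [nu, Nat.mod_self]
  · rw [nu, if_neg] <;> rw [Nat.mod_eq_of_lt hlt] <;> omega

lemma nu_sub_hbar {hbar k : ℕ} (h : 0 < hbar) (hk : hbar < k) :
    nu hbar (k - hbar) = nu hbar k := by
  have h1 : k - hbar + hbar = k := by omega
  have h2 : (k - hbar) % hbar = k % hbar := by
    conv_rhs => rw [← h1]
    rw [Nat.add_mod_right]
  unfold nu; rw [h2]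

lemma periodic_eq_nu {α : Sort*} {hbar : ℕ} (h : 0 < hbar) (f : ℕ → α)
    (hf : ∀ j : ℕ, 1 ≤ j → f (j + hbar) = f j) :
    ∀ k : ℕ, 1 ≤ k → f k = f (nu hbar k) := by
  intro k
  induction k using Nat.strong_induction_on with
  | _ k ih =>
    intro hk
    by_cases hle : k ≤ hbar
    · rw [nu_eq_self hk hle]
    · have hlt : hbar < k := by omega
      have h1 : k - hbar + hbar = k := by omega
      have := hf (k - hbar) (by omega)
      rw [h1] at this
      rw [this] at *
      rw [ih (k - hbar) (by omega) (by omega), nu_sub_hbar h hlt]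

lemma t_diff_nu {hbar : ℕ} (h : 0 < hbar) (t : ℕ → ℝ)
    (htper : ∀ j : ℕ, t (j + hbar) = t j + t hbar) :
    ∀ k : ℕ, 1 ≤ k → t k - t (k - 1) = t (nu hbar k) - t (nu hbar k - 1) := by
  intro k
  induction k using Nat.strong_induction_on with
  | _ k ih =>
    intro hk
    by_cases hle : k ≤ hbar
    · rw [nu_eq_self hk hle]
    · have hlt : hbar < k := by omega
      have h1 : k - hbar + hbar = k := by omega
      have h2 : k - hbar - 1 + hbar = k - 1 := by omega
      have e1 := htper (k - hbar); rw [h1] at e1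
      have e2 := htper (k - hbar - 1); rw [h2] at e2
      rw [e1, e2]
      have := ih (k - hbar) (by omega) (by omega)
      rw [nu_sub_hbar h hlt] at this
      linarith [this]

lemma nu_succ_cases {hbar : ℕ} (h : 0 < hbar) (k : ℕ) :
    (1 ≤ nu hbar k ∧ nu hbar (k + 1) - 1 = nu hbar k) ∨
      (nu hbar (k + 1) = 1 ∧ nu hbar k = hbar) := by
  by_cases hb1 : hbar = 1
  · subst hb1; right; simp [nu, Nat.mod_one]
  · have hb2 : 2 ≤ hbar := by omega
    have h1 : (k + 1) % hbar = (k % hbar + 1) % hbar := by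
      rw [Nat.add_mod, Nat.mod_eq_of_lt (show 1 < hbar by omega)]
    have hr : k % hbar < hbar := Nat.mod_lt _ h
    by_cases h2 : k % hbar + 1 = hbar
    · have h3 : (k % hbar + 1) % hbar = 0 := by rw [h2, Nat.mod_self]
      left
      unfold nu
      rw [h1, h3, if_pos rfl, if_neg (by omega)]
      omega
    · have h3 : (k % hbar + 1) % hbar = k % hbar + 1 :=
        Nat.mod_eq_of_lt (by omega)
      by_cases h4 : k % hbar = 0
      · right; rw [h4] at h1 h3; unfold nu; rw [h1, h3, if_pos h4, if_neg (by omega)]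
        exact ⟨rfl, rfl⟩
      · left; unfold nu; rw [h1, h3, if_neg h4, if_neg (by omega)]
        omega

lemma inv_unique {E : Type*} [NormedAddCommGroup E] [Module ℝ E]
    (a b g : E →L[ℝ] E) (h1 : a ∘L g = 1) (h2 : g ∘L b = 1) : a = b :=
  left_inv_eq_right_inv (show a * g = 1 from h1) (show g * b = 1 from h2)

section SAlemmas

variable {E F : Type*} [NormedAddCommGroup E] [InnerProductSpace ℝ E] [CompleteSpace E]
  [NormedAddCommGroup F] [InnerProductSpace ℝ F] [CompleteSpace F]

lemma sa_inner {A : E →L[ℝ] E} (hA : IsSelfAdjoint A) (x y : E) :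
    ⟪A x, y⟫ = ⟪x, A y⟫ :=
  (ContinuousLinearMap.isSelfAdjoint_iff_isSymmetric.mp hA) x y

lemma adj_inner (f : E →L[ℝ] F) (y : F) (x : E) : ⟪adj f y, x⟫ = ⟪y, f x⟫ :=
  ContinuousLinearMap.adjoint_inner_left f x y

lemma sa_BPB {B : F →L[ℝ] E} {P : E →L[ℝ] E} (hP : IsSelfAdjoint P) :
    IsSelfAdjoint (adj B ∘L P ∘L B) := by
  rw [ContinuousLinearMap.isSelfAdjoint_iff_isSymmetric]
  intro x y
  show ⟪adj B (P (B x)), y⟫ = ⟪x, adj B (P (B y))⟫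
  rw [adj_inner, sa_inner hP]
  conv_rhs => rw [real_inner_comm, adj_inner]
  exact real_inner_comm _ _

lemma ext_of_quadratic {A C : E →L[ℝ] E} (hA : IsSelfAdjoint A) (hC : IsSelfAdjoint C)
    (h : ∀ x : E, ⟪A x, x⟫ = ⟪C x, x⟫) : A = C := by
  have hD : IsSelfAdjoint (A - C) := hA.sub hC
  have h0 : ∀ x : E, ⟪(A - C) x, x⟫ = 0 := by
    intro x; simp [ContinuousLinearMap.sub_apply, inner_sub_left, h x]
  have hz : ∀ x y : E, ⟪(A - C) x, y⟫ = 0 := by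
    intro x y
    have e := h0 (x + y)
    rw [map_add, inner_add_left, inner_add_right, inner_add_right, h0 x, h0 y] at e
    have e2 : ⟪(A - C) y, x⟫ = ⟪y, (A - C) x⟫ := sa_inner hD y x
    rw [e2, real_inner_comm y ((A - C) x)] at e
    rw [real_inner_comm]
    linarith
  have : ∀ x : E, (A - C) x = 0 := fun x =>
    ext_inner_right ℝ (fun y => by rw [hz x y, inner_zero_left])
  ext x
  have := this x
  simpa [ContinuousLinearMap.sub_apply, sub_eq_zero] using this

end SAlemmas

section Step

lemma step_identity (Tk : H →L[ℝ] H) (Bk : U →L[ℝ] H) (Qk : H →L[ℝ] H) (Rk : U →L[ℝ] U)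
    (Pk Pprev : H →L[ℝ] H) (Gi : U →L[ℝ] U)
    (hPk : IsSelfAdjoint Pk) (hRk : IsSelfAdjoint Rk)
    (hGi2 : (Rk + adj Bk ∘L Pk ∘L Bk) ∘L Gi = 1)
    (hric : Pprev - adj Tk ∘L Pk ∘L Tk =
      adj Tk ∘L Qk ∘L Tk - adj Tk ∘L Pk ∘L Bk ∘L Gi ∘L adj Bk ∘L Pk ∘L Tk)
    (xp : H) (uk : U) :
    ⟪Qk (Tk xp), Tk xp⟫ + ⟪Rk uk, uk⟫ + ⟪Pk (Tk xp + Bk uk), Tk xp + Bk uk⟫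
      = ⟪Pprev xp, xp⟫ +
        ⟪(Rk + adj Bk ∘L Pk ∘L Bk) (uk + Gi (adj Bk (Pk (Tk xp)))),
          uk + Gi (adj Bk (Pk (Tk xp)))⟫ := by
  have hcross : ∀ z : U, ⟪Pk (Bk z), Tk xp⟫ = ⟪Pk (Tk xp), Bk z⟫ := by
    intro z; rw [sa_inner hPk]; exact real_inner_comm _ _
  have hvu : ∀ z : U, ⟪adj Bk (Pk (Tk xp)), z⟫ = ⟪Pk (Tk xp), Bk z⟫ := fun z =>
    adj_inner Bk _ z
  have exp1 : ⟪Pk (Tk xp + Bk uk), Tk xp + Bk uk⟫ =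
      ⟪Pk (Tk xp), Tk xp⟫ + 2 * ⟪Pk (Tk xp), Bk uk⟫ + ⟪Pk (Bk uk), Bk uk⟫ := by
    rw [map_add, inner_add_left, inner_add_right, inner_add_right, hcross uk]
    ring
  have hGsa : IsSelfAdjoint (Rk + adj Bk ∘L Pk ∘L Bk) := hRk.add (sa_BPB hPk)
  have hGg : (Rk + adj Bk ∘L Pk ∘L Bk) (Gi (adj Bk (Pk (Tk xp)))) = adj Bk (Pk (Tk xp)) := by
    have := congrArg (fun f : U →L[ℝ] U => f (adj Bk (Pk (Tk xp)))) hGi2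
    simpa using this
  have exp2 : ⟪Pprev xp, xp⟫ =
      ⟪Pk (Tk xp), Tk xp⟫ + ⟪Qk (Tk xp), Tk xp⟫
        - ⟪adj Bk (Pk (Tk xp)), Gi (adj Bk (Pk (Tk xp)))⟫ := by
    have h1 : Pprev = (adj Tk ∘L Qk ∘L Tk
        - adj Tk ∘L Pk ∘L Bk ∘L Gi ∘L adj Bk ∘L Pk ∘L Tk) + adj Tk ∘L Pk ∘L Tk :=
      eq_add_of_sub_eq hric
    rw [h1]
    simp only [ContinuousLinearMap.add_apply, ContinuousLinearMap.sub_apply,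
      ContinuousLinearMap.comp_apply, inner_add_left, inner_sub_left]
    rw [adj_inner, adj_inner, adj_inner]
    have h2 : ⟪Pk (Bk (Gi (adj Bk (Pk (Tk xp))))), Tk xp⟫
        = ⟪adj Bk (Pk (Tk xp)), Gi (adj Bk (Pk (Tk xp)))⟫ := by
      rw [hcross, ← hvu]
    linarith [h2]
  have exp3 : ⟪(Rk + adj Bk ∘L Pk ∘L Bk) (uk + Gi (adj Bk (Pk (Tk xp)))),
      uk + Gi (adj Bk (Pk (Tk xp)))⟫ =
      ⟪Rk uk, uk⟫ + ⟪Pk (Bk uk), Bk uk⟫ + 2 * ⟪Pk (Tk xp), Bk uk⟫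
        + ⟪adj Bk (Pk (Tk xp)), Gi (adj Bk (Pk (Tk xp)))⟫ := by
    rw [map_add, inner_add_left, inner_add_right, inner_add_right, hGg]
    have h3 : ⟪(Rk + adj Bk ∘L Pk ∘L Bk) uk, Gi (adj Bk (Pk (Tk xp)))⟫
        = ⟪uk, adj Bk (Pk (Tk xp))⟫ := by
      rw [sa_inner hGsa, hGg]
    have h4 : ⟪(Rk + adj Bk ∘L Pk ∘L Bk) uk, uk⟫ = ⟪Rk uk, uk⟫ + ⟪Pk (Bk uk), Bk uk⟫ := by
      simp only [ContinuousLinearMap.add_apply, ContinuousLinearMap.comp_apply,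
        inner_add_left]
      rw [adj_inner]
    have h5 : ⟪uk, adj Bk (Pk (Tk xp))⟫ = ⟪Pk (Tk xp), Bk uk⟫ := by
      rw [real_inner_comm, hvu]
    have h6 : ⟪adj Bk (Pk (Tk xp)), uk⟫ = ⟪Pk (Tk xp), Bk uk⟫ := hvu uk
    rw [h3, h4, h5, h6]; ring
  linarith [exp1, exp2, exp3]

end Step

-- ===== the closed-loop feedback construction =====

def fbPlus (T : ℝ → H →L[ℝ] H) (t : ℕ → ℝ) (hbar : ℕ) (B : ℕ → U →L[ℝ] H)
    (P : ℕ → H →L[ℝ] H) (Ginv : ℕ → U →L[ℝ] U) (ℓ : ℕ) (x0 : H) : ℕ → H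
  | 0 => x0
  | m + 1 =>
      T (t (ℓ + m + 1) - t (ℓ + m)) (fbPlus T t hbar B P Ginv ℓ x0 m)
        + B (nu hbar (ℓ + m + 1))
            (-(Ginv (ℓ + m + 1) (adj (B (nu hbar (ℓ + m + 1)))
              (P (nu hbar (ℓ + m + 1))
                (T (t (ℓ + m + 1) - t (ℓ + m)) (fbPlus T t hbar B P Ginv ℓ x0 m))))))

def fbControl (T : ℝ → H →L[ℝ] H) (t : ℕ → ℝ) (hbar : ℕ) (B : ℕ → U →L[ℝ] H)
    (P : ℕ → H →L[ℝ] H) (Ginv : ℕ → U →L[ℝ] U) (ℓ : ℕ) (x0 : H) (k : ℕ) : U :=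
  if ℓ < k then
    -(Ginv k (adj (B (nu hbar k)) (P (nu hbar k)
      (T (t k - t (k - 1)) (fbPlus T t hbar B P Ginv ℓ x0 (k - 1 - ℓ))))))
  else 0

lemma fb_xplus (T : ℝ → H →L[ℝ] H) (t : ℕ → ℝ) (hbar : ℕ) (B : ℕ → U →L[ℝ] H)
    (P : ℕ → H →L[ℝ] H) (Ginv : ℕ → U →L[ℝ] U) (ℓ : ℕ) (x0 : H) :
    ∀ m : ℕ, xplusFrom T t hbar B ℓ x0 (fbControl T t hbar B P Ginv ℓ x0) m
      = fbPlus T t hbar B P Ginv ℓ x0 m := by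
  intro m
  induction m with
  | zero => rfl
  | succ m ih =>
    show T (t (ℓ + m + 1) - t (ℓ + m)) (xplusFrom T t hbar B ℓ x0 _ m)
        + B (nu hbar (ℓ + m + 1)) (fbControl T t hbar B P Ginv ℓ x0 (ℓ + m + 1)) = _
    rw [ih]
    unfold fbControl
    rw [if_pos (by omega)]
    have h1 : ℓ + m + 1 - 1 - ℓ = m := by omega
    have h2 : ℓ + m + 1 - 1 = ℓ + m := rfl
    rw [h1, h2]
    rfl

lemma fb_spec (T : ℝ → H →L[ℝ] H) (t : ℕ → ℝ) (hbar : ℕ) (B : ℕ → U →L[ℝ] H)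
    (P : ℕ → H →L[ℝ] H) (Ginv : ℕ → U →L[ℝ] U) (ℓ : ℕ) (x0 : H) :
    ∀ k : ℕ, ℓ < k → fbControl T t hbar B P Ginv ℓ x0 k
      = -(Ginv k (adj (B (nu hbar k)) (P (nu hbar k)
          (xtrajFrom T t hbar B ℓ x0 (fbControl T t hbar B P Ginv ℓ x0) (k - ℓ))))) := by
  intro k hk
  obtain ⟨j, rfl⟩ : ∃ j, k = ℓ + j + 1 := ⟨k - ℓ - 1, by omega⟩
  have h1 : ℓ + j + 1 - ℓ = j + 1 := by omega
  have h2 : ℓ + j + 1 - 1 - ℓ = j := by omega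
  have h3 : ℓ + j + 1 - 1 = ℓ + j := rfl
  have h4 : xtrajFrom T t hbar B ℓ x0 (fbControl T t hbar B P Ginv ℓ x0) (j + 1)
      = T (t (ℓ + j + 1) - t (ℓ + j)) (fbPlus T t hbar B P Ginv ℓ x0 j) := by
    show T (t (ℓ + j + 1) - t (ℓ + j)) (xplusFrom T t hbar B ℓ x0 _ j) = _
    rw [fb_xplus]
  rw [h1, h4]
  unfold fbControl
  rw [if_pos (by omega), h2, h3]

-- ===== master lemma =====

lemma master (T : ℝ → H →L[ℝ] H) (hbar : ℕ) (hhbar : 0 < hbar)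
    (t : ℕ → ℝ) (htper : ∀ j : ℕ, t (j + hbar) = t j + t hbar)
    (B : ℕ → U →L[ℝ] H)
    (Q : ℕ → H →L[ℝ] H) (R : ℕ → U →L[ℝ] U)
    (hQ : MemMCoercive hbar Q) (hR : MemMCoercive hbar R)
    (P : ℕ → H →L[ℝ] H) (Ginv : ℕ → U →L[ℝ] U)
    (hPpos : ∀ ℓ : ℕ, ℓ ≤ hbar → IsNonnegOp (P ℓ)) (hPper : P 0 = P hbar)
    (hGinv : ∀ k : ℕ, 1 ≤ k →
      (Ginv k ∘L (R k + adj (B (nu hbar k)) ∘L P (nu hbar k) ∘L B (nu hbar k)) = 1) ∧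
      ((R k + adj (B (nu hbar k)) ∘L P (nu hbar k) ∘L B (nu hbar k)) ∘L Ginv k = 1))
    (hRic : ∀ k : ℕ, 1 ≤ k → k ≤ hbar → RicEq T t B Q R P (Ginv k) k) :
    (∀ ℓ : ℕ, ℓ ≤ hbar → ∀ x0 : H, ∀ u ∈ UadFrom T t hbar B ℓ x0, ∀ w : ℕ → U,
      (∀ m : ℕ, w m = u (ℓ + m + 1) +
        Ginv (ℓ + m + 1) (adj (B (nu hbar (ℓ + m + 1))) (P (nu hbar (ℓ + m + 1))
          (xtrajFrom T t hbar B ℓ x0 u (m + 1))))) →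
      Jinf T t hbar B Q R ℓ x0 u = ⟪P ℓ x0, x0⟫ +
        ∑' m : ℕ,
          ⟪(R (ℓ + m + 1) + adj (B (nu hbar (ℓ + m + 1))) ∘L P (nu hbar (ℓ + m + 1)) ∘L
              B (nu hbar (ℓ + m + 1))) (w m), w m⟫) ∧
    (∀ ℓ : ℕ, ℓ ≤ hbar → ∀ x0 : H, ∀ ustar : ℕ → U,
      (∀ k : ℕ, ℓ < k → ustar k =
        -(Ginv k (adj (B (nu hbar k)) (P (nu hbar k)
            (xtrajFrom T t hbar B ℓ x0 ustar (k - ℓ)))))) →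
      ustar ∈ UadFrom T t hbar B ℓ x0 ∧
        Jinf T t hbar B Q R ℓ x0 ustar = ⟪P ℓ x0, x0⟫) ∧
    (∀ ℓ : ℕ, ℓ ≤ hbar → ∀ x0 : H, Vinf T t hbar B Q R ℓ x0 = ⟪P ℓ x0, x0⟫) := by
  -- basic facts
  have hQper : ∀ k, 1 ≤ k → Q k = Q (nu hbar k) := periodic_eq_nu hhbar Q hQ.2
  have hRper : ∀ k, 1 ≤ k → R k = R (nu hbar k) := periodic_eq_nu hhbar R hR.2
  have hnu1 : ∀ j : ℕ, 1 ≤ nu hbar j := nu_pos hhbar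
  have hnu2 : ∀ j : ℕ, nu hbar j ≤ hbar := nu_le hhbar
  have hQsa : ∀ j, 1 ≤ j → IsSelfAdjoint (Q j) := fun j hj => (hQ.1 j hj).1.1
  have hRsa : ∀ j, 1 ≤ j → IsSelfAdjoint (R j) := fun j hj => (hR.1 j hj).1.1
  have hQnn : ∀ j, 1 ≤ j → ∀ x : H, 0 ≤ ⟪Q j x, x⟫ := fun j hj => (hQ.1 j hj).1.2
  have hRnn : ∀ j, 1 ≤ j → ∀ v : U, 0 ≤ ⟪R j v, v⟫ := fun j hj => (hR.1 j hj).1.2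
  have hPsa : ∀ j : ℕ, IsSelfAdjoint (P (nu hbar j)) := fun j => (hPpos _ (hnu2 j)).1
  have hPnn : ∀ (j : ℕ) (x : H), 0 ≤ ⟪P (nu hbar j) x, x⟫ := fun j => (hPpos _ (hnu2 j)).2
  have hne : (Finset.Icc 1 hbar).Nonempty := ⟨1, by simp [Finset.mem_Icc]; omega⟩
  have hmemnu : ∀ j : ℕ, nu hbar j ∈ Finset.Icc 1 hbar := fun j => by
    simp [Finset.mem_Icc]; exact ⟨hnu1 j, hnu2 j⟩
  -- norm bounds
  have hCQb : ∀ k, 1 ≤ k → ∀ x : H,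
      ⟪Q k x, x⟫ ≤ ((Finset.Icc 1 hbar).sup' hne fun j => ‖Q j‖) * ‖x‖ ^ 2 := by
    intro k hk x
    have h1 : ⟪Q k x, x⟫ ≤ ‖Q k‖ * ‖x‖ ^ 2 := by
      calc ⟪Q k x, x⟫ ≤ ‖Q k x‖ * ‖x‖ := real_inner_le_norm _ _
      _ ≤ (‖Q k‖ * ‖x‖) * ‖x‖ :=
        mul_le_mul_of_nonneg_right ((Q k).le_opNorm x) (norm_nonneg x)
      _ = ‖Q k‖ * ‖x‖ ^ 2 := by ring
    have h2 : ‖Q k‖ ≤ (Finset.Icc 1 hbar).sup' hne fun j => ‖Q j‖ := by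
      rw [hQper k hk]; exact Finset.le_sup' (fun j => ‖Q j‖) (hmemnu k)
    exact le_trans h1 (mul_le_mul_of_nonneg_right h2 (by positivity))
  have hCRb : ∀ k, 1 ≤ k → ∀ v : U,
      ⟪R k v, v⟫ ≤ ((Finset.Icc 1 hbar).sup' hne fun j => ‖R j‖) * ‖v‖ ^ 2 := by
    intro k hk v
    have h1 : ⟪R k v, v⟫ ≤ ‖R k‖ * ‖v‖ ^ 2 := by
      calc ⟪R k v, v⟫ ≤ ‖R k v‖ * ‖v‖ := real_inner_le_norm _ _
      _ ≤ (‖R k‖ * ‖v‖) * ‖v‖ :=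
        mul_le_mul_of_nonneg_right ((R k).le_opNorm v) (norm_nonneg v)
      _ = ‖R k‖ * ‖v‖ ^ 2 := by ring
    have h2 : ‖R k‖ ≤ (Finset.Icc 1 hbar).sup' hne fun j => ‖R j‖ := by
      rw [hRper k hk]; exact Finset.le_sup' (fun j => ‖R j‖) (hmemnu k)
    exact le_trans h1 (mul_le_mul_of_nonneg_right h2 (by positivity))
  have hCPb : ∀ (j : ℕ) (x : H),
      ⟪P (nu hbar j) x, x⟫ ≤ ((Finset.Icc 1 hbar).sup' hne fun i => ‖P i‖) * ‖x‖ ^ 2 := by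
    intro j x
    have h1 : ⟪P (nu hbar j) x, x⟫ ≤ ‖P (nu hbar j)‖ * ‖x‖ ^ 2 := by
      calc ⟪P (nu hbar j) x, x⟫ ≤ ‖P (nu hbar j) x‖ * ‖x‖ := real_inner_le_norm _ _
      _ ≤ (‖P (nu hbar j)‖ * ‖x‖) * ‖x‖ :=
        mul_le_mul_of_nonneg_right ((P (nu hbar j)).le_opNorm x) (norm_nonneg x)
      _ = ‖P (nu hbar j)‖ * ‖x‖ ^ 2 := by ring
    exact le_trans h1 (mul_le_mul_of_nonneg_right
      (Finset.le_sup' (fun i => ‖P i‖) (hmemnu j)) (by positivity))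
  have hCBb : ∀ (j : ℕ) (v : U),
      ‖B (nu hbar j) v‖ ≤ ((Finset.Icc 1 hbar).sup' hne fun i => ‖B i‖) * ‖v‖ := by
    intro j v
    exact le_trans ((B (nu hbar j)).le_opNorm v)
      (mul_le_mul_of_nonneg_right (Finset.le_sup' (fun i => ‖B i‖) (hmemnu j)) (norm_nonneg v))
  -- coercivity constants
  have hRco : ∀ j, 1 ≤ j → ∃ δ : ℝ, 0 < δ ∧ ∀ v : U, δ * ‖v‖ ^ 2 ≤ ⟪R j v, v⟫ :=
    fun j hj => (hR.1 j hj).2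
  have hQco : ∀ j, 1 ≤ j → ∃ δ : ℝ, 0 < δ ∧ ∀ x : H, δ * ‖x‖ ^ 2 ≤ ⟪Q j x, x⟫ :=
    fun j hj => (hQ.1 j hj).2
  obtain ⟨sR, hsRpos, hsR⟩ :
      ∃ sR : ℝ, 0 < sR ∧ ∀ k, 1 ≤ k → ∀ v : U, sR * ‖v‖ ^ 2 ≤ ⟪R k v, v⟫ := by
    classical
    set fR : ℕ → ℝ := fun j => if h : 1 ≤ j then (hRco j h).choose else 1 with hfR
    have hfRpos : ∀ j, 0 < fR j := by
      intro j; by_cases h : 1 ≤ j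
      · simp only [hfR, dif_pos h]; exact (hRco j h).choose_spec.1
      · simp only [hfR, dif_neg h]; norm_num
    have hfRle : ∀ j (hj : 1 ≤ j) (v : U), fR j * ‖v‖ ^ 2 ≤ ⟪R j v, v⟫ := by
      intro j hj v; simp only [hfR, dif_pos hj]; exact (hRco j hj).choose_spec.2 v
    refine ⟨(Finset.Icc 1 hbar).inf' hne fR, ?_, ?_⟩
    · exact (Finset.lt_inf'_iff hne).mpr fun j _ => hfRpos j
    · intro k hk v
      rw [hRper k hk]
      refine le_trans (mul_le_mul_of_nonneg_right (Finset.inf'_le fR (hmemnu k))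
        (by positivity)) (hfRle _ (hnu1 k) v)
  obtain ⟨sQ, hsQpos, hsQ⟩ :
      ∃ sQ : ℝ, 0 < sQ ∧ ∀ k, 1 ≤ k → ∀ x : H, sQ * ‖x‖ ^ 2 ≤ ⟪Q k x, x⟫ := by
    classical
    set fQ : ℕ → ℝ := fun j => if h : 1 ≤ j then (hQco j h).choose else 1 with hfQ
    have hfQpos : ∀ j, 0 < fQ j := by
      intro j; by_cases h : 1 ≤ j
      · simp only [hfQ, dif_pos h]; exact (hQco j h).choose_spec.1
      · simp only [hfQ, dif_neg h]; norm_num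
    have hfQle : ∀ j (hj : 1 ≤ j) (x : H), fQ j * ‖x‖ ^ 2 ≤ ⟪Q j x, x⟫ := by
      intro j hj x; simp only [hfQ, dif_pos hj]; exact (hQco j hj).choose_spec.2 x
    refine ⟨(Finset.Icc 1 hbar).inf' hne fQ, ?_, ?_⟩
    · exact (Finset.lt_inf'_iff hne).mpr fun j _ => hfQpos j
    · intro k hk x
      rw [hQper k hk]
      refine le_trans (mul_le_mul_of_nonneg_right (Finset.inf'_le fQ (hmemnu k))
        (by positivity)) (hfQle _ (hnu1 k) x)
  -- nonnegativity of the G-quadratic form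
  have hg_nn : ∀ k, 1 ≤ k → ∀ v : U,
      0 ≤ ⟪(R k + adj (B (nu hbar k)) ∘L P (nu hbar k) ∘L B (nu hbar k)) v, v⟫ := by
    intro k hk v
    have he : ⟪(R k + adj (B (nu hbar k)) ∘L P (nu hbar k) ∘L B (nu hbar k)) v, v⟫
        = ⟪R k v, v⟫ + ⟪P (nu hbar k) (B (nu hbar k) v), B (nu hbar k) v⟫ := by
      simp only [ContinuousLinearMap.add_apply, ContinuousLinearMap.comp_apply,
        inner_add_left]
      rw [adj_inner]
    rw [he]
    exact add_nonneg (hRnn k hk v) (hPnn k _)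
  -- the one-step identity along trajectories
  have hstep : ∀ (ℓ : ℕ) (x0 : H) (u : ℕ → U) (N : ℕ),
      (⟪Q (ℓ + N + 1) (xtrajFrom T t hbar B ℓ x0 u (N + 1)),
          xtrajFrom T t hbar B ℓ x0 u (N + 1)⟫
        + ⟪R (ℓ + N + 1) (u (ℓ + N + 1)), u (ℓ + N + 1)⟫)
      + ⟪P (nu hbar (ℓ + N + 1)) (xplusFrom T t hbar B ℓ x0 u (N + 1)),
          xplusFrom T t hbar B ℓ x0 u (N + 1)⟫
      = ⟪P (nu hbar (ℓ + N)) (xplusFrom T t hbar B ℓ x0 u N),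
          xplusFrom T t hbar B ℓ x0 u N⟫
        + ⟪(R (ℓ + N + 1) + adj (B (nu hbar (ℓ + N + 1))) ∘L P (nu hbar (ℓ + N + 1)) ∘L
              B (nu hbar (ℓ + N + 1)))
            (u (ℓ + N + 1) + Ginv (ℓ + N + 1) (adj (B (nu hbar (ℓ + N + 1)))
              (P (nu hbar (ℓ + N + 1)) (xtrajFrom T t hbar B ℓ x0 u (N + 1))))),
            u (ℓ + N + 1) + Ginv (ℓ + N + 1) (adj (B (nu hbar (ℓ + N + 1)))
              (P (nu hbar (ℓ + N + 1)) (xtrajFrom T t hbar B ℓ x0 u (N + 1))))⟫ := by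
    intro ℓ x0 u N
    have hk1 : 1 ≤ ℓ + N + 1 := by omega
    obtain ⟨g1, g2, ric3⟩ := hRic (nu hbar (ℓ + N + 1)) (hnu1 _) (hnu2 _)
    have hT : t (nu hbar (ℓ + N + 1)) - t (nu hbar (ℓ + N + 1) - 1)
        = t (ℓ + N + 1) - t (ℓ + N) := by
      have h' := t_diff_nu hhbar t htper (ℓ + N + 1) hk1
      have h'' : ℓ + N + 1 - 1 = ℓ + N := rfl
      rw [h''] at h'
      linarith
    rw [hT] at ric3
    have hRk : R (ℓ + N + 1) = R (nu hbar (ℓ + N + 1)) := hRper _ hk1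
    have hQk : Q (ℓ + N + 1) = Q (nu hbar (ℓ + N + 1)) := hQper _ hk1
    have hGeq : Ginv (ℓ + N + 1) = Ginv (nu hbar (ℓ + N + 1)) := by
      refine inv_unique _ _ _ (hGinv (ℓ + N + 1) hk1).1 ?_
      rw [hRk]; exact g2
    have hPprev : P (nu hbar (ℓ + N + 1) - 1) = P (nu hbar (ℓ + N)) := by
      rcases nu_succ_cases hhbar (ℓ + N) with ⟨_, h⟩ | ⟨h1', h2'⟩
      · rw [h]
      · rw [h1', h2']; simpa using hPper
    have hX : xtrajFrom T t hbar B ℓ x0 u (N + 1)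
        = T (t (ℓ + N + 1) - t (ℓ + N)) (xplusFrom T t hbar B ℓ x0 u N) := rfl
    have hXp : xplusFrom T t hbar B ℓ x0 u (N + 1)
        = T (t (ℓ + N + 1) - t (ℓ + N)) (xplusFrom T t hbar B ℓ x0 u N)
          + B (nu hbar (ℓ + N + 1)) (u (ℓ + N + 1)) := rfl
    rw [hQk, hRk, hGeq, ← hPprev, hX, hXp]
    exact step_identity _ _ _ _ _ _ _ (hPsa _) (hRsa _ (hnu1 _))
      g2 ric3 (xplusFrom T t hbar B ℓ x0 u N) (u (ℓ + N + 1))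
  -- telescoping
  have core : ∀ (ℓ : ℕ) (x0 : H) (u : ℕ → U) (N : ℕ),
      (∑ m ∈ Finset.range N,
        (⟪Q (ℓ + m + 1) (xtrajFrom T t hbar B ℓ x0 u (m + 1)),
            xtrajFrom T t hbar B ℓ x0 u (m + 1)⟫
          + ⟪R (ℓ + m + 1) (u (ℓ + m + 1)), u (ℓ + m + 1)⟫))
      + ⟪P (nu hbar (ℓ + N)) (xplusFrom T t hbar B ℓ x0 u N),
          xplusFrom T t hbar B ℓ x0 u N⟫
      = ⟪P (nu hbar ℓ) x0, x0⟫
        + ∑ m ∈ Finset.range N,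
          ⟪(R (ℓ + m + 1) + adj (B (nu hbar (ℓ + m + 1))) ∘L P (nu hbar (ℓ + m + 1)) ∘L
              B (nu hbar (ℓ + m + 1)))
            (u (ℓ + m + 1) + Ginv (ℓ + m + 1) (adj (B (nu hbar (ℓ + m + 1)))
              (P (nu hbar (ℓ + m + 1)) (xtrajFrom T t hbar B ℓ x0 u (m + 1))))),
            u (ℓ + m + 1) + Ginv (ℓ + m + 1) (adj (B (nu hbar (ℓ + m + 1)))
              (P (nu hbar (ℓ + m + 1)) (xtrajFrom T t hbar B ℓ x0 u (m + 1))))⟫ := by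
    intro ℓ x0 u N
    induction N with
    | zero => simp [xplusFrom]
    | succ N ih =>
      rw [Finset.sum_range_succ, Finset.sum_range_succ,
        show ℓ + (N + 1) = ℓ + N + 1 from rfl]
      have := hstep ℓ x0 u N
      linarith
  -- φ at time 0
  have phi0 : ∀ ℓ : ℕ, ℓ ≤ hbar → ∀ x0 : H, ⟪P (nu hbar ℓ) x0, x0⟫ = ⟪P ℓ x0, x0⟫ := by
    intro ℓ hℓ x0
    rcases Nat.eq_zero_or_pos ℓ with rfl | hpos
    · have : nu hbar 0 = hbar := by unfold nu; simp
      rw [this, ← hPper]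
    · rw [nu_eq_self hpos hℓ]
  -- decay of the terminal term
  have hphi_tend : ∀ (ℓ : ℕ) (x0 : H) (u : ℕ → U),
      Summable (fun j : ℕ => ‖u (ℓ + j + 1)‖ ^ 2) →
      Summable (fun j : ℕ => ‖xtrajFrom T t hbar B ℓ x0 u (j + 1)‖ ^ 2) →
      Tendsto (fun N : ℕ => ⟪P (nu hbar (ℓ + N)) (xplusFrom T t hbar B ℓ x0 u N),
        xplusFrom T t hbar B ℓ x0 u N⟫) atTop (nhds 0) := by
    intro ℓ x0 u hu hx
    have hXn : Tendsto (fun m : ℕ => ‖xtrajFrom T t hbar B ℓ x0 u (m + 1)‖) atTop (nhds 0) := by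
      have h1 := hx.tendsto_atTop_zero
      have h2 := (Real.continuous_sqrt.tendsto' 0 0 Real.sqrt_zero).comp h1
      simpa [Function.comp_def, Real.sqrt_sq_eq_abs] using h2
    have hun : Tendsto (fun m : ℕ => ‖u (ℓ + m + 1)‖) atTop (nhds 0) := by
      have h1 := hu.tendsto_atTop_zero
      have h2 := (Real.continuous_sqrt.tendsto' 0 0 Real.sqrt_zero).comp h1
      simpa [Function.comp_def, Real.sqrt_sq_eq_abs] using h2
    have hBn : Tendsto (fun m : ℕ => ‖B (nu hbar (ℓ + m + 1)) (u (ℓ + m + 1))‖)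
        atTop (nhds 0) := by
      refine squeeze_zero (fun _ => norm_nonneg _) (fun m => hCBb (ℓ + m + 1) (u (ℓ + m + 1))) ?_
      simpa using hun.const_mul ((Finset.Icc 1 hbar).sup' hne fun i => ‖B i‖)
    have hXpn : Tendsto (fun m : ℕ => ‖xplusFrom T t hbar B ℓ x0 u (m + 1)‖)
        atTop (nhds 0) := by
      refine squeeze_zero
        (g := fun m => ‖xtrajFrom T t hbar B ℓ x0 u (m + 1)‖
          + ‖B (nu hbar (ℓ + m + 1)) (u (ℓ + m + 1))‖)
        (fun _ => norm_nonneg _) (fun m => ?_) ?_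
      · have he : xplusFrom T t hbar B ℓ x0 u (m + 1)
            = xtrajFrom T t hbar B ℓ x0 u (m + 1) + B (nu hbar (ℓ + m + 1)) (u (ℓ + m + 1)) := rfl
        rw [he]
        exact norm_add_le _ _
      · simpa using hXn.add hBn
    have hphi1 : Tendsto (fun m : ℕ => ⟪P (nu hbar (ℓ + (m + 1)))
        (xplusFrom T t hbar B ℓ x0 u (m + 1)), xplusFrom T t hbar B ℓ x0 u (m + 1)⟫)
        atTop (nhds 0) := by
      have hb : Tendsto (fun m : ℕ =>
          ((Finset.Icc 1 hbar).sup' hne fun i => ‖P i‖) * ‖xplusFrom T t hbar B ℓ x0 u (m + 1)‖ ^ 2)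
          atTop (nhds 0) := by
        have := (hXpn.pow 2).const_mul ((Finset.Icc 1 hbar).sup' hne fun i => ‖P i‖)
        simpa using this
      exact squeeze_zero (fun m => hPnn _ _) (fun m => hCPb (ℓ + (m + 1)) _) hb
    exact (tendsto_add_atTop_iff_nat 1).mp hphi1
  -- PART 1
  have part1 : ∀ ℓ : ℕ, ℓ ≤ hbar → ∀ x0 : H, ∀ u ∈ UadFrom T t hbar B ℓ x0, ∀ w : ℕ → U,
      (∀ m : ℕ, w m = u (ℓ + m + 1) +
        Ginv (ℓ + m + 1) (adj (B (nu hbar (ℓ + m + 1))) (P (nu hbar (ℓ + m + 1))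
          (xtrajFrom T t hbar B ℓ x0 u (m + 1))))) →
      Jinf T t hbar B Q R ℓ x0 u = ⟪P ℓ x0, x0⟫ +
        ∑' m : ℕ,
          ⟪(R (ℓ + m + 1) + adj (B (nu hbar (ℓ + m + 1))) ∘L P (nu hbar (ℓ + m + 1)) ∘L
              B (nu hbar (ℓ + m + 1))) (w m), w m⟫ := by
    intro ℓ hℓ x0 u hu w hw
    obtain ⟨hu1, hu2⟩ := hu
    have hcsum : Summable (fun m : ℕ =>
        ⟪Q (ℓ + m + 1) (xtrajFrom T t hbar B ℓ x0 u (m + 1)),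
          xtrajFrom T t hbar B ℓ x0 u (m + 1)⟫
        + ⟪R (ℓ + m + 1) (u (ℓ + m + 1)), u (ℓ + m + 1)⟫) := by
      refine Summable.of_nonneg_of_le
        (fun m => add_nonneg (hQnn _ (by omega) _) (hRnn _ (by omega) _))
        (fun m => add_le_add (hCQb _ (by omega) _) (hCRb _ (by omega) _))
        ((hu2.mul_left _).add (hu1.mul_left _))
    have hphit := hphi_tend ℓ x0 u hu1 hu2
    have hparts := hcsum.hasSum.tendsto_sum_nat
    have hgt : Tendsto (fun N : ℕ => ∑ m ∈ Finset.range N,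
        ⟪(R (ℓ + m + 1) + adj (B (nu hbar (ℓ + m + 1))) ∘L P (nu hbar (ℓ + m + 1)) ∘L
            B (nu hbar (ℓ + m + 1)))
          (u (ℓ + m + 1) + Ginv (ℓ + m + 1) (adj (B (nu hbar (ℓ + m + 1)))
            (P (nu hbar (ℓ + m + 1)) (xtrajFrom T t hbar B ℓ x0 u (m + 1))))),
          u (ℓ + m + 1) + Ginv (ℓ + m + 1) (adj (B (nu hbar (ℓ + m + 1)))
            (P (nu hbar (ℓ + m + 1)) (xtrajFrom T t hbar B ℓ x0 u (m + 1))))⟫)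
        atTop (nhds ((∑' m : ℕ,
          (⟪Q (ℓ + m + 1) (xtrajFrom T t hbar B ℓ x0 u (m + 1)),
            xtrajFrom T t hbar B ℓ x0 u (m + 1)⟫
          + ⟪R (ℓ + m + 1) (u (ℓ + m + 1)), u (ℓ + m + 1)⟫)) + 0 - ⟪P (nu hbar ℓ) x0, x0⟫)) := by
      have h2 := (hparts.add hphit).sub (tendsto_const_nhds (x := ⟪P (nu hbar ℓ) x0, x0⟫))
      have hfe : (fun N : ℕ => ∑ m ∈ Finset.range N,
          ⟪(R (ℓ + m + 1) + adj (B (nu hbar (ℓ + m + 1))) ∘L P (nu hbar (ℓ + m + 1)) ∘L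
              B (nu hbar (ℓ + m + 1)))
            (u (ℓ + m + 1) + Ginv (ℓ + m + 1) (adj (B (nu hbar (ℓ + m + 1)))
              (P (nu hbar (ℓ + m + 1)) (xtrajFrom T t hbar B ℓ x0 u (m + 1))))),
            u (ℓ + m + 1) + Ginv (ℓ + m + 1) (adj (B (nu hbar (ℓ + m + 1)))
              (P (nu hbar (ℓ + m + 1)) (xtrajFrom T t hbar B ℓ x0 u (m + 1))))⟫)
          = fun N : ℕ => (∑ m ∈ Finset.range N,
            (⟪Q (ℓ + m + 1) (xtrajFrom T t hbar B ℓ x0 u (m + 1)),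
              xtrajFrom T t hbar B ℓ x0 u (m + 1)⟫
            + ⟪R (ℓ + m + 1) (u (ℓ + m + 1)), u (ℓ + m + 1)⟫)
            + ⟪P (nu hbar (ℓ + N)) (xplusFrom T t hbar B ℓ x0 u N),
                xplusFrom T t hbar B ℓ x0 u N⟫) - ⟪P (nu hbar ℓ) x0, x0⟫ := by
        funext N
        have := core ℓ x0 u N
        linarith
      rw [hfe]
      exact h2
    set Sg : ℝ := (∑' m : ℕ,
        (⟪Q (ℓ + m + 1) (xtrajFrom T t hbar B ℓ x0 u (m + 1)),
          xtrajFrom T t hbar B ℓ x0 u (m + 1)⟫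
        + ⟪R (ℓ + m + 1) (u (ℓ + m + 1)), u (ℓ + m + 1)⟫)) + 0 - ⟪P (nu hbar ℓ) x0, x0⟫
      with hSg
    have hgmono : Monotone (fun N : ℕ => ∑ m ∈ Finset.range N,
        ⟪(R (ℓ + m + 1) + adj (B (nu hbar (ℓ + m + 1))) ∘L P (nu hbar (ℓ + m + 1)) ∘L
            B (nu hbar (ℓ + m + 1)))
          (u (ℓ + m + 1) + Ginv (ℓ + m + 1) (adj (B (nu hbar (ℓ + m + 1)))
            (P (nu hbar (ℓ + m + 1)) (xtrajFrom T t hbar B ℓ x0 u (m + 1))))),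
          u (ℓ + m + 1) + Ginv (ℓ + m + 1) (adj (B (nu hbar (ℓ + m + 1)))
            (P (nu hbar (ℓ + m + 1)) (xtrajFrom T t hbar B ℓ x0 u (m + 1))))⟫) := by
      refine monotone_nat_of_le_succ fun n => ?_
      rw [Finset.sum_range_succ]
      exact le_add_of_nonneg_right (hg_nn _ (by omega) _)
    have hgb := fun N => hgmono.ge_of_tendsto hgt N
    have hgsum : Summable (fun m : ℕ =>
        ⟪(R (ℓ + m + 1) + adj (B (nu hbar (ℓ + m + 1))) ∘L P (nu hbar (ℓ + m + 1)) ∘L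
            B (nu hbar (ℓ + m + 1)))
          (u (ℓ + m + 1) + Ginv (ℓ + m + 1) (adj (B (nu hbar (ℓ + m + 1)))
            (P (nu hbar (ℓ + m + 1)) (xtrajFrom T t hbar B ℓ x0 u (m + 1))))),
          u (ℓ + m + 1) + Ginv (ℓ + m + 1) (adj (B (nu hbar (ℓ + m + 1)))
            (P (nu hbar (ℓ + m + 1)) (xtrajFrom T t hbar B ℓ x0 u (m + 1))))⟫) :=
      summable_of_sum_range_le (fun m => hg_nn _ (by omega) _) hgb
    have hgval := tendsto_nhds_unique hgsum.hasSum.tendsto_sum_nat hgt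
    have htw : (∑' m : ℕ,
        ⟪(R (ℓ + m + 1) + adj (B (nu hbar (ℓ + m + 1))) ∘L P (nu hbar (ℓ + m + 1)) ∘L
            B (nu hbar (ℓ + m + 1))) (w m), w m⟫)
        = ∑' m : ℕ,
        ⟪(R (ℓ + m + 1) + adj (B (nu hbar (ℓ + m + 1))) ∘L P (nu hbar (ℓ + m + 1)) ∘L
            B (nu hbar (ℓ + m + 1)))
          (u (ℓ + m + 1) + Ginv (ℓ + m + 1) (adj (B (nu hbar (ℓ + m + 1)))
            (P (nu hbar (ℓ + m + 1)) (xtrajFrom T t hbar B ℓ x0 u (m + 1))))),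
          u (ℓ + m + 1) + Ginv (ℓ + m + 1) (adj (B (nu hbar (ℓ + m + 1)))
            (P (nu hbar (ℓ + m + 1)) (xtrajFrom T t hbar B ℓ x0 u (m + 1))))⟫ :=
      tsum_congr fun m => by rw [hw m]
    show (∑' m : ℕ,
        (⟪Q (ℓ + m + 1) (xtrajFrom T t hbar B ℓ x0 u (m + 1)),
          xtrajFrom T t hbar B ℓ x0 u (m + 1)⟫
        + ⟪R (ℓ + m + 1) (u (ℓ + m + 1)), u (ℓ + m + 1)⟫)) = _
    rw [htw]
    have hp0 := phi0 ℓ hℓ x0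
    linarith [hgval]
  -- PART 2
  have part2 : ∀ ℓ : ℕ, ℓ ≤ hbar → ∀ x0 : H, ∀ ustar : ℕ → U,
      (∀ k : ℕ, ℓ < k → ustar k =
        -(Ginv k (adj (B (nu hbar k)) (P (nu hbar k)
            (xtrajFrom T t hbar B ℓ x0 ustar (k - ℓ)))))) →
      ustar ∈ UadFrom T t hbar B ℓ x0 ∧
        Jinf T t hbar B Q R ℓ x0 ustar = ⟪P ℓ x0, x0⟫ := by
    intro ℓ hℓ x0 us hstar
    have hw0 : ∀ m : ℕ, us (ℓ + m + 1) + Ginv (ℓ + m + 1) (adj (B (nu hbar (ℓ + m + 1)))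
        (P (nu hbar (ℓ + m + 1)) (xtrajFrom T t hbar B ℓ x0 us (m + 1)))) = 0 := by
      intro m
      have h1 := hstar (ℓ + m + 1) (by omega)
      have h2 : ℓ + m + 1 - ℓ = m + 1 := by omega
      rw [h2] at h1
      rw [h1]
      exact neg_add_cancel _
    have hg0 : ∀ m : ℕ,
        ⟪(R (ℓ + m + 1) + adj (B (nu hbar (ℓ + m + 1))) ∘L P (nu hbar (ℓ + m + 1)) ∘L
            B (nu hbar (ℓ + m + 1)))
          (us (ℓ + m + 1) + Ginv (ℓ + m + 1) (adj (B (nu hbar (ℓ + m + 1)))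
            (P (nu hbar (ℓ + m + 1)) (xtrajFrom T t hbar B ℓ x0 us (m + 1))))),
          us (ℓ + m + 1) + Ginv (ℓ + m + 1) (adj (B (nu hbar (ℓ + m + 1)))
            (P (nu hbar (ℓ + m + 1)) (xtrajFrom T t hbar B ℓ x0 us (m + 1))))⟫ = 0 := by
      intro m
      rw [hw0 m]
      simp
    have hsum0 : ∀ N : ℕ, (∑ m ∈ Finset.range N,
        (⟪Q (ℓ + m + 1) (xtrajFrom T t hbar B ℓ x0 us (m + 1)),
          xtrajFrom T t hbar B ℓ x0 us (m + 1)⟫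
        + ⟪R (ℓ + m + 1) (us (ℓ + m + 1)), us (ℓ + m + 1)⟫))
        = ⟪P (nu hbar ℓ) x0, x0⟫
          - ⟪P (nu hbar (ℓ + N)) (xplusFrom T t hbar B ℓ x0 us N),
              xplusFrom T t hbar B ℓ x0 us N⟫ := by
      intro N
      have h1 := core ℓ x0 us N
      have h2 : (∑ m ∈ Finset.range N,
          ⟪(R (ℓ + m + 1) + adj (B (nu hbar (ℓ + m + 1))) ∘L P (nu hbar (ℓ + m + 1)) ∘L
              B (nu hbar (ℓ + m + 1)))
            (us (ℓ + m + 1) + Ginv (ℓ + m + 1) (adj (B (nu hbar (ℓ + m + 1)))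
              (P (nu hbar (ℓ + m + 1)) (xtrajFrom T t hbar B ℓ x0 us (m + 1))))),
            us (ℓ + m + 1) + Ginv (ℓ + m + 1) (adj (B (nu hbar (ℓ + m + 1)))
              (P (nu hbar (ℓ + m + 1)) (xtrajFrom T t hbar B ℓ x0 us (m + 1))))⟫) = 0 :=
        Finset.sum_eq_zero fun m _ => hg0 m
      rw [h2] at h1
      linarith
    have hbound : ∀ N : ℕ, (∑ m ∈ Finset.range N,
        (⟪Q (ℓ + m + 1) (xtrajFrom T t hbar B ℓ x0 us (m + 1)),
          xtrajFrom T t hbar B ℓ x0 us (m + 1)⟫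
        + ⟪R (ℓ + m + 1) (us (ℓ + m + 1)), us (ℓ + m + 1)⟫))
        ≤ ⟪P (nu hbar ℓ) x0, x0⟫ := by
      intro N
      have := hsum0 N
      have hφ := hPnn (ℓ + N) (xplusFrom T t hbar B ℓ x0 us N)
      linarith
    have hcsum : Summable (fun m : ℕ =>
        ⟪Q (ℓ + m + 1) (xtrajFrom T t hbar B ℓ x0 us (m + 1)),
          xtrajFrom T t hbar B ℓ x0 us (m + 1)⟫
        + ⟪R (ℓ + m + 1) (us (ℓ + m + 1)), us (ℓ + m + 1)⟫) :=
      summable_of_sum_range_le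
        (fun m => add_nonneg (hQnn _ (by omega) _) (hRnn _ (by omega) _)) hbound
    have husum : Summable (fun j : ℕ => ‖us (ℓ + j + 1)‖ ^ 2) := by
      refine Summable.of_nonneg_of_le (fun j => by positivity) (fun j => ?_)
        (hcsum.mul_left sR⁻¹)
      have h1 := hsR (ℓ + j + 1) (by omega) (us (ℓ + j + 1))
      have h2 := hQnn (ℓ + j + 1) (by omega) (xtrajFrom T t hbar B ℓ x0 us (j + 1))
      have h3 : 0 ≤ sR⁻¹ := le_of_lt (inv_pos.mpr hsRpos)
      calc ‖us (ℓ + j + 1)‖ ^ 2 = sR⁻¹ * (sR * ‖us (ℓ + j + 1)‖ ^ 2) := by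
            field_simp
      _ ≤ sR⁻¹ * (⟪Q (ℓ + j + 1) (xtrajFrom T t hbar B ℓ x0 us (j + 1)),
            xtrajFrom T t hbar B ℓ x0 us (j + 1)⟫
          + ⟪R (ℓ + j + 1) (us (ℓ + j + 1)), us (ℓ + j + 1)⟫) := by
            apply mul_le_mul_of_nonneg_left _ h3
            linarith
    have hXsum : Summable (fun j : ℕ => ‖xtrajFrom T t hbar B ℓ x0 us (j + 1)‖ ^ 2) := by
      refine Summable.of_nonneg_of_le (fun j => by positivity) (fun j => ?_)
        (hcsum.mul_left sQ⁻¹)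
      have h1 := hsQ (ℓ + j + 1) (by omega) (xtrajFrom T t hbar B ℓ x0 us (j + 1))
      have h2 := hRnn (ℓ + j + 1) (by omega) (us (ℓ + j + 1))
      have h3 : 0 ≤ sQ⁻¹ := le_of_lt (inv_pos.mpr hsQpos)
      calc ‖xtrajFrom T t hbar B ℓ x0 us (j + 1)‖ ^ 2
          = sQ⁻¹ * (sQ * ‖xtrajFrom T t hbar B ℓ x0 us (j + 1)‖ ^ 2) := by field_simp
      _ ≤ sQ⁻¹ * (⟪Q (ℓ + j + 1) (xtrajFrom T t hbar B ℓ x0 us (j + 1)),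
            xtrajFrom T t hbar B ℓ x0 us (j + 1)⟫
          + ⟪R (ℓ + j + 1) (us (ℓ + j + 1)), us (ℓ + j + 1)⟫) := by
            apply mul_le_mul_of_nonneg_left _ h3
            linarith
    refine ⟨⟨husum, hXsum⟩, ?_⟩
    have hphit := hphi_tend ℓ x0 us husum hXsum
    have hgt2 : Tendsto (fun N : ℕ => ∑ m ∈ Finset.range N,
        (⟪Q (ℓ + m + 1) (xtrajFrom T t hbar B ℓ x0 us (m + 1)),
          xtrajFrom T t hbar B ℓ x0 us (m + 1)⟫
        + ⟪R (ℓ + m + 1) (us (ℓ + m + 1)), us (ℓ + m + 1)⟫))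
        atTop (nhds (⟪P (nu hbar ℓ) x0, x0⟫ - 0)) := by
      have h2 := (tendsto_const_nhds (x := ⟪P (nu hbar ℓ) x0, x0⟫)).sub hphit
      have hfe : (fun N : ℕ => ∑ m ∈ Finset.range N,
          (⟪Q (ℓ + m + 1) (xtrajFrom T t hbar B ℓ x0 us (m + 1)),
            xtrajFrom T t hbar B ℓ x0 us (m + 1)⟫
          + ⟪R (ℓ + m + 1) (us (ℓ + m + 1)), us (ℓ + m + 1)⟫))
          = fun N : ℕ => ⟪P (nu hbar ℓ) x0, x0⟫
            - ⟪P (nu hbar (ℓ + N)) (xplusFrom T t hbar B ℓ x0 us N),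
                xplusFrom T t hbar B ℓ x0 us N⟫ := funext fun N => hsum0 N
      rw [hfe]
      exact h2
    have := tendsto_nhds_unique hcsum.hasSum.tendsto_sum_nat hgt2
    show (∑' m : ℕ,
        (⟪Q (ℓ + m + 1) (xtrajFrom T t hbar B ℓ x0 us (m + 1)),
          xtrajFrom T t hbar B ℓ x0 us (m + 1)⟫
        + ⟪R (ℓ + m + 1) (us (ℓ + m + 1)), us (ℓ + m + 1)⟫)) = ⟪P ℓ x0, x0⟫
    have hp0 := phi0 ℓ hℓ x0
    linarith
  -- PART 3
  refine ⟨part1, part2, ?_⟩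
  intro ℓ hℓ x0
  have hfb := fb_spec T t hbar B P Ginv ℓ x0
  obtain ⟨hmem, hJv⟩ := part2 ℓ hℓ x0 (fbControl T t hbar B P Ginv ℓ x0) hfb
  have hlb : ∀ c ∈ {c : ℝ | ∃ u ∈ UadFrom T t hbar B ℓ x0,
      c = Jinf T t hbar B Q R ℓ x0 u}, ⟪P ℓ x0, x0⟫ ≤ c := by
    rintro c ⟨u, hu, rfl⟩
    have h1 := part1 ℓ hℓ x0 u hu
      (fun m => u (ℓ + m + 1) + Ginv (ℓ + m + 1) (adj (B (nu hbar (ℓ + m + 1)))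
        (P (nu hbar (ℓ + m + 1)) (xtrajFrom T t hbar B ℓ x0 u (m + 1)))))
      (fun m => rfl)
    rw [h1]
    have h2 := tsum_nonneg (L := SummationFilter.unconditional ℕ) (fun m : ℕ => hg_nn (ℓ + m + 1) (by omega)
      (u (ℓ + m + 1) + Ginv (ℓ + m + 1) (adj (B (nu hbar (ℓ + m + 1)))
        (P (nu hbar (ℓ + m + 1)) (xtrajFrom T t hbar B ℓ x0 u (m + 1))))))
    linarith
  show sInf {c : ℝ | ∃ u ∈ UadFrom T t hbar B ℓ x0,
      c = Jinf T t hbar B Q R ℓ x0 u} = ⟪P ℓ x0, x0⟫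
  apply le_antisymm
  · refine csInf_le ⟨⟪P ℓ x0, x0⟫, fun c hc => hlb c hc⟩ ?_
    exact ⟨fbControl T t hbar B P Ginv ℓ x0, hmem, hJv.symm⟩
  · exact le_csInf ⟨Jinf T t hbar B Q R ℓ x0 (fbControl T t hbar B P Ginv ℓ x0),
      fbControl T t hbar B P Ginv ℓ x0, hmem, rfl⟩ hlb

end Aux

/-- Completion-of-square identity and uniqueness for the periodic Riccati-type equation.
Here `Ginv k` is the inverse of `G_k := R_k + B_{ν(k)}* P̃_{ν(k)} B_{ν(k)}`, and the square
`‖G_k^{1/2} w‖²` is written as the inner product `⟨G_k w, w⟩`. -/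
theorem completion_of_square
    {H U : Type*} [NormedAddCommGroup H] [InnerProductSpace ℝ H]
    [CompleteSpace H] [NormedAddCommGroup U] [InnerProductSpace ℝ U] [CompleteSpace U]
    (T : ℝ → H →L[ℝ] H) (hT0 : T 0 = 1)
    (hTadd : ∀ a b : ℝ, 0 ≤ a → 0 ≤ b → T (a + b) = T a ∘L T b)
    (hTcont : ∀ x : H, ContinuousOn (fun τ : ℝ => T τ x) (Set.Ici (0 : ℝ)))
    (hbar : ℕ) (hhbar : 0 < hbar)
    (t : ℕ → ℝ) (ht0 : t 0 = 0) (htmono : StrictMono t)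
    (htper : ∀ j : ℕ, t (j + hbar) = t j + t hbar)
    (B : ℕ → U →L[ℝ] H)
    (Q : ℕ → H →L[ℝ] H) (R : ℕ → U →L[ℝ] U)
    (hQ : MemMCoercive hbar Q) (hR : MemMCoercive hbar R)
    (P : ℕ → H →L[ℝ] H) (Ginv : ℕ → U →L[ℝ] U)
    (hPpos : ∀ ℓ : ℕ, ℓ ≤ hbar → IsNonnegOp (P ℓ)) (hPper : P 0 = P hbar)
    (hGinv : ∀ k : ℕ, 1 ≤ k →
      (Ginv k ∘L (R k + adj (B (nu hbar k)) ∘L P (nu hbar k) ∘L B (nu hbar k)) = 1) ∧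
      ((R k + adj (B (nu hbar k)) ∘L P (nu hbar k) ∘L B (nu hbar k)) ∘L Ginv k = 1))
    (hRic : ∀ k : ℕ, 1 ≤ k → k ≤ hbar → RicEq T t B Q R P (Ginv k) k) :
    -- (1) the completion-of-square identity for every admissible control
    (∀ ℓ : ℕ, ℓ ≤ hbar → ∀ x0 : H, ∀ u ∈ UadFrom T t hbar B ℓ x0, ∀ w : ℕ → U,
      (∀ m : ℕ, w m = u (ℓ + m + 1) +
        Ginv (ℓ + m + 1) (adj (B (nu hbar (ℓ + m + 1))) (P (nu hbar (ℓ + m + 1))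
          (xtrajFrom T t hbar B ℓ x0 u (m + 1))))) →
      Jinf T t hbar B Q R ℓ x0 u = ⟪P ℓ x0, x0⟫ +
        ∑' m : ℕ,
          ⟪(R (ℓ + m + 1) + adj (B (nu hbar (ℓ + m + 1))) ∘L P (nu hbar (ℓ + m + 1)) ∘L
              B (nu hbar (ℓ + m + 1))) (w m), w m⟫) ∧
    -- (2) the Riccati feedback control is admissible and attains ⟨P̃_ℓ x0, x0⟩
    (∀ ℓ : ℕ, ℓ ≤ hbar → ∀ x0 : H, ∀ ustar : ℕ → U,
      (∀ k : ℕ, ℓ < k → ustar k =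
        -(Ginv k (adj (B (nu hbar k)) (P (nu hbar k)
            (xtrajFrom T t hbar B ℓ x0 ustar (k - ℓ)))))) →
      ustar ∈ UadFrom T t hbar B ℓ x0 ∧
        Jinf T t hbar B Q R ℓ x0 ustar = ⟪P ℓ x0, x0⟫) ∧
    -- (3) consequently V(x0; ℓ) = ⟨P̃_ℓ x0, x0⟩
    (∀ ℓ : ℕ, ℓ ≤ hbar → ∀ x0 : H, Vinf T t hbar B Q R ℓ x0 = ⟪P ℓ x0, x0⟫) ∧
    -- (4) and the periodic Riccati-type equation has at most one solution
    (∀ P1 P2 : ℕ → H →L[ℝ] H, IsRicSol T t hbar B Q R P1 → IsRicSol T t hbar B Q R P2 →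
      ∀ k : ℕ, k ≤ hbar → P1 k = P2 k) := by
  obtain ⟨p1, p2, p3⟩ := master T hbar hhbar t htper B Q R hQ hR P Ginv hPpos hPper hGinv hRic
  refine ⟨p1, p2, p3, ?_⟩
  have build : ∀ P' : ℕ → H →L[ℝ] H, IsRicSol T t hbar B Q R P' →
      ∀ k : ℕ, k ≤ hbar → ∀ x0 : H, Vinf T t hbar B Q R k x0 = ⟪P' k x0, x0⟫ := by
    intro P' hsol
    obtain ⟨hpos, hper, hric⟩ := hsol
    classical
    set Γ : ℕ → U →L[ℝ] U :=
      fun k => if h : 1 ≤ k ∧ k ≤ hbar then (hric k h.1 h.2).choose else 1 with hΓdef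
    have hΓ : ∀ k, ∀ h : 1 ≤ k ∧ k ≤ hbar, RicEq T t B Q R P' (Γ k) k := by
      intro k h
      simp only [hΓdef, dif_pos h]
      exact (hric k h.1 h.2).choose_spec
    have hGinv' : ∀ k : ℕ, 1 ≤ k →
        (Γ (nu hbar k) ∘L (R k + adj (B (nu hbar k)) ∘L P' (nu hbar k) ∘L B (nu hbar k)) = 1) ∧
        ((R k + adj (B (nu hbar k)) ∘L P' (nu hbar k) ∘L B (nu hbar k)) ∘L Γ (nu hbar k) = 1) := by
      intro k hk
      have hR' : R k = R (nu hbar k) := periodic_eq_nu hhbar R hR.2 k hk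
      have h := hΓ (nu hbar k) ⟨nu_pos hhbar k, nu_le hhbar k⟩
      rw [hR']
      exact ⟨h.1, h.2.1⟩
    have hRic' : ∀ k : ℕ, 1 ≤ k → k ≤ hbar → RicEq T t B Q R P' (Γ (nu hbar k)) k := by
      intro k hk1 hk2
      rw [nu_eq_self hk1 hk2]
      exact hΓ k ⟨hk1, hk2⟩
    exact (master T hbar hhbar t htper B Q R hQ hR P' (fun k => Γ (nu hbar k))
      hpos hper hGinv' hRic').2.2
  intro P1 P2 h1 h2 k hk
  have v1 := build P1 h1 k hk
  have v2 := build P2 h2 k hk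
  exact ext_of_quadratic (h1.1 k hk).1 (h2.1 k hk).1 (fun x => by rw [← v1 x, ← v2 x])

end ImpulseControl
end
end

section
/- Finite-step contraction with bounded control cost implies nonempty admissible sets. Suppose there exist σ ∈ (0,1), k ∈ ℕ⁺ and C > 0 such that for every x_0 ∈ H there is a control u ∈ l²(ℕ⁺;U) with ‖x(t_{kħ};x_0,u)‖_H ≤ σ‖x_0‖_H and ‖u‖_{l²(ℕ⁺;U)} ≤ C‖x_0‖_H. Then there exists a constant C' > 0 such that for every x_0 ∈ H there is a control v ∈ l²(ℕ⁺;U) with ‖v‖_{l²(ℕ⁺;U)} ≤ C'‖x_0‖_H and Σ_{j=1}^{∞} ‖x(t_j;x_0,v)‖_H² ≤ C'²‖x_0‖_H²; in particular U_ad(x_0) ≠ ∅ for every x_0 ∈ H. -/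
open scoped RealInnerProductSpace
noncomputable section

set_option linter.unusedSectionVars false
namespace ImpulseControl

variable {H U : Type*} [NormedAddCommGroup H] [InnerProductSpace ℝ H] [CompleteSpace H]
  [NormedAddCommGroup U] [InnerProductSpace ℝ U] [CompleteSpace U]

section AuxLemmas

variable {H U : Type*} [NormedAddCommGroup H] [InnerProductSpace ℝ H] [CompleteSpace H]
  [NormedAddCommGroup U] [InnerProductSpace ℝ U] [CompleteSpace U]
  (T : ℝ → H →L[ℝ] H) (t : ℕ → ℝ) (hbar : ℕ) (B : ℕ → U →L[ℝ] H)

lemma xplusFrom_succ (ℓ : ℕ) (x0 : H) (u : ℕ → U) (m : ℕ) :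
    xplusFrom T t hbar B ℓ x0 u (m + 1)
      = T (t (ℓ + m + 1) - t (ℓ + m)) (xplusFrom T t hbar B ℓ x0 u m)
        + B (nu hbar (ℓ + m + 1)) (u (ℓ + m + 1)) := rfl

lemma xtrajFrom_succ (ℓ : ℕ) (x0 : H) (u : ℕ → U) (m : ℕ) :
    xtrajFrom T t hbar B ℓ x0 u (m + 1)
      = T (t (ℓ + m + 1) - t (ℓ + m)) (xplusFrom T t hbar B ℓ x0 u m) := rfl

lemma xplusFrom_congr (x0 : H) (u w : ℕ → U) :
    ∀ m : ℕ, (∀ j, 1 ≤ j → j ≤ m → u j = w j) →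
      xplusFrom T t hbar B 0 x0 u m = xplusFrom T t hbar B 0 x0 w m
  | 0, _ => rfl
  | m + 1, h => by
      rw [xplusFrom_succ, xplusFrom_succ,
        xplusFrom_congr x0 u w m (fun j h1 h2 => h j h1 (h2.trans (Nat.le_succ m))),
        h (0 + m + 1) (by omega) (by omega)]

lemma t_period (htper : ∀ j : ℕ, t (j + hbar) = t j + t hbar) :
    ∀ (c j : ℕ), t (j + c * hbar) = t j + c * t hbar
  | 0, j => by simp
  | c + 1, j => by
      have h1 := htper (j + c * hbar)
      have h2 := t_period htper c j
      have h3 : j + (c + 1) * hbar = j + c * hbar + hbar := by ring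
      rw [h3, h1, h2]; push_cast; ring

lemma nu_shift (ℓ j : ℕ) (hℓ : hbar ∣ ℓ) : nu hbar (ℓ + j) = nu hbar j := by
  obtain ⟨c, rfl⟩ := hℓ
  simp [nu, Nat.mul_add_mod]

lemma t_diff_shift (htper : ∀ j : ℕ, t (j + hbar) = t j + t hbar)
    (ℓ m : ℕ) (hℓ : hbar ∣ ℓ) :
    t (ℓ + m + 1) - t (ℓ + m) = t (m + 1) - t m := by
  obtain ⟨c, rfl⟩ := hℓ
  have h1 : hbar * c + m + 1 = (m + 1) + c * hbar := by ring
  have h2 : hbar * c + m = m + c * hbar := by ring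
  rw [h1, h2, t_period t hbar htper c (m + 1), t_period t hbar htper c m]; ring

lemma xplusFrom_shift (htper : ∀ j : ℕ, t (j + hbar) = t j + t hbar)
    (ℓ : ℕ) (hℓ : hbar ∣ ℓ) (x0 : H) (u : ℕ → U) :
    ∀ m : ℕ, xplusFrom T t hbar B 0 x0 u (ℓ + m)
      = xplusFrom T t hbar B 0 (xplusFrom T t hbar B 0 x0 u ℓ) (fun j => u (ℓ + j)) m
  | 0 => rfl
  | m + 1 => by
      have e2 : nu hbar (ℓ + (m + 1)) = nu hbar (m + 1) := nu_shift hbar ℓ (m + 1) hℓ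
      have e1 : t (ℓ + (m + 1)) - t (ℓ + m) = t (m + 1) - t m := by
        have h := t_diff_shift t hbar htper ℓ m hℓ
        rwa [Nat.add_assoc] at h
      rw [show ℓ + (m + 1) = (ℓ + m) + 1 from rfl, xplusFrom_succ, xplusFrom_succ,
        xplusFrom_shift htper ℓ hℓ x0 u m]
      simp only [Nat.zero_add]
      rw [t_diff_shift t hbar htper ℓ m hℓ,
        show ℓ + m + 1 = ℓ + (m + 1) from Nat.add_assoc ℓ m 1, e2]

lemma xplus_norm_bound :
    ∀ m : ℕ, ∃ K : ℝ, 1 ≤ K ∧ ∀ (x0 : H) (u : ℕ → U) (S : ℝ), 0 ≤ S →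
      (∀ j, 1 ≤ j → ‖u j‖ ≤ S) → ‖xplusFrom T t hbar B 0 x0 u m‖ ≤ K * (‖x0‖ + S)
  | 0 => ⟨1, le_refl 1, fun x0 u S hS _ => by
      rw [show xplusFrom T t hbar B 0 x0 u 0 = x0 from rfl, one_mul]
      exact le_add_of_nonneg_right hS⟩
  | m + 1 => by
      obtain ⟨K, hK1, hK⟩ := xplus_norm_bound m
      refine ⟨‖T (t (m + 1) - t m)‖ * K + ‖B (nu hbar (m + 1))‖ + 1, ?_, ?_⟩
      · have h1 : 0 ≤ ‖T (t (m + 1) - t m)‖ * K :=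
          mul_nonneg (norm_nonneg _) (zero_le_one.trans hK1)
        have h2 : (0:ℝ) ≤ ‖B (nu hbar (m + 1))‖ := norm_nonneg _
        linarith
      · intro x0 u S hS hu
        have hx := hK x0 u S hS hu
        rw [xplusFrom_succ]
        simp only [Nat.zero_add]
        have h1 : ‖T (t (m + 1) - t m) (xplusFrom T t hbar B 0 x0 u m)
              + B (nu hbar (m + 1)) (u (m + 1))‖
            ≤ ‖T (t (m + 1) - t m)‖ * ‖xplusFrom T t hbar B 0 x0 u m‖
              + ‖B (nu hbar (m + 1))‖ * ‖u (m + 1)‖ := by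
          refine (norm_add_le _ _).trans (add_le_add ?_ ?_) <;>
            exact ContinuousLinearMap.le_opNorm _ _
        have h2 : ‖u (m + 1)‖ ≤ S := hu (m + 1) (by omega)
        have h3 : (0:ℝ) ≤ ‖T (t (m + 1) - t m)‖ := norm_nonneg _
        have h4 : (0:ℝ) ≤ ‖B (nu hbar (m + 1))‖ := norm_nonneg _
        have h5 : (0:ℝ) ≤ ‖x0‖ := norm_nonneg _
        nlinarith [norm_nonneg (xplusFrom T t hbar B 0 x0 u m)]

lemma xtraj_norm_bound :
    ∀ m : ℕ, ∃ K : ℝ, 1 ≤ K ∧ ∀ (x0 : H) (u : ℕ → U) (S : ℝ), 0 ≤ S →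
      (∀ j, 1 ≤ j → ‖u j‖ ≤ S) → ‖xtrajFrom T t hbar B 0 x0 u m‖ ≤ K * (‖x0‖ + S)
  | 0 => ⟨1, le_refl 1, fun x0 u S hS _ => by
      rw [show xtrajFrom T t hbar B 0 x0 u 0 = x0 from rfl, one_mul]
      exact le_add_of_nonneg_right hS⟩
  | m + 1 => by
      obtain ⟨K, hK1, hK⟩ := xplus_norm_bound T t hbar B m
      refine ⟨‖T (t (m + 1) - t m)‖ * K + 1, ?_, ?_⟩
      · have h1 : 0 ≤ ‖T (t (m + 1) - t m)‖ * K :=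
          mul_nonneg (norm_nonneg _) (zero_le_one.trans hK1)
        linarith
      · intro x0 u S hS hu
        have hx := hK x0 u S hS hu
        rw [xtrajFrom_succ]
        simp only [Nat.zero_add]
        have h1 := ContinuousLinearMap.le_opNorm (T (t (m + 1) - t m))
          (xplusFrom T t hbar B 0 x0 u m)
        have h3 : (0:ℝ) ≤ ‖T (t (m + 1) - t m)‖ := norm_nonneg _
        have h5 : (0:ℝ) ≤ ‖x0‖ := norm_nonneg _
        nlinarith [norm_nonneg (xplusFrom T t hbar B 0 x0 u m)]

lemma xtraj_norm_bound_uniform (N : ℕ) :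
    ∃ K : ℝ, 1 ≤ K ∧ ∀ m, m ≤ N → ∀ (x0 : H) (u : ℕ → U) (S : ℝ), 0 ≤ S →
      (∀ j, 1 ≤ j → ‖u j‖ ≤ S) → ‖xtrajFrom T t hbar B 0 x0 u m‖ ≤ K * (‖x0‖ + S) := by
  induction N with
  | zero =>
      obtain ⟨K, hK1, hK⟩ := xtraj_norm_bound T t hbar B 0
      exact ⟨K, hK1, fun m hm x0 u S hS hu => by
        interval_cases m; exact hK x0 u S hS hu⟩
  | succ N ih =>
      obtain ⟨K, hK1, hK⟩ := ih
      obtain ⟨K', hK'1, hK'⟩ := xtraj_norm_bound T t hbar B (N + 1)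
      refine ⟨max K K', le_trans hK1 (le_max_left _ _), fun m hm x0 u S hS hu => ?_⟩
      have hxS : (0:ℝ) ≤ ‖x0‖ + S := add_nonneg (norm_nonneg _) hS
      rcases Nat.lt_succ_iff_lt_or_eq.mp (Nat.lt_succ_of_le hm) with h | h
      · exact (hK m (Nat.lt_succ_iff.mp h) x0 u S hS hu).trans
          (mul_le_mul_of_nonneg_right (le_max_left _ _) hxS)
      · subst h
        exact (hK' x0 u S hS hu).trans
          (mul_le_mul_of_nonneg_right (le_max_right _ _) hxS)

lemma geo_div_bound {r : ℝ} (hr0 : 0 < r) (hr1 : r < 1) (N : ℕ) (hN : 1 ≤ N) :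
    ∃ G : ℝ, 0 < G ∧ Summable (fun j : ℕ => r ^ (j / N)) ∧
      (∑' j : ℕ, r ^ (j / N)) ≤ G := by
  set ρ : ℝ := r ^ ((N : ℝ)⁻¹) with hρdef
  have hNR : (0:ℝ) < (N:ℝ) := by exact_mod_cast hN
  have hρ0 : 0 ≤ ρ := Real.rpow_nonneg hr0.le _
  have hρ1 : ρ < 1 := Real.rpow_lt_one hr0.le hr1 (by positivity)
  have hgs : Summable (fun j : ℕ => r⁻¹ * ρ ^ j) :=
    (summable_geometric_of_lt_one hρ0 hρ1).mul_left _
  have hle : ∀ j : ℕ, r ^ (j / N) ≤ r⁻¹ * ρ ^ j := by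
    intro j
    have e1 := Nat.div_add_mod j N
    have e2 : j % N < N := Nat.mod_lt _ (by omega)
    have e3 : j < N * (j / N) + N := by omega
    have hcast : (j : ℝ) < (N : ℝ) * ((j / N : ℕ) : ℝ) + N := by exact_mod_cast e3
    have h1 : (j : ℝ) / N - 1 ≤ ((j / N : ℕ) : ℝ) := by
      rw [sub_le_iff_le_add, div_le_iff₀ hNR]
      nlinarith
    calc r ^ (j / N) = r ^ (((j / N : ℕ) : ℝ)) := (Real.rpow_natCast r _).symm
      _ ≤ r ^ ((j : ℝ) / N - 1) :=
          Real.rpow_le_rpow_of_exponent_ge hr0 hr1.le h1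
      _ = r⁻¹ * ρ ^ j := by
          rw [hρdef, ← Real.rpow_natCast (r ^ ((N : ℝ)⁻¹)) j,
            ← Real.rpow_mul hr0.le, ← Real.rpow_neg_one r, ← Real.rpow_add hr0]
          congr 1
          field_simp
          ring
  have hsum : Summable (fun j : ℕ => r ^ (j / N)) :=
    Summable.of_nonneg_of_le (fun j => by positivity) hle hgs
  refine ⟨r⁻¹ * (1 - ρ)⁻¹, ?_, hsum, ?_⟩
  · have : 0 < 1 - ρ := by linarith
    exact mul_pos (inv_pos.mpr hr0) (inv_pos.mpr this)
  · calc (∑' j : ℕ, r ^ (j / N)) ≤ ∑' j : ℕ, r⁻¹ * ρ ^ j := Summable.tsum_le_tsum hle hsum hgs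
      _ = r⁻¹ * (1 - ρ)⁻¹ := by
          rw [tsum_mul_left, tsum_geometric_of_lt_one hρ0 hρ1]

end AuxLemmas

set_option maxHeartbeats 1000000 in
/-- Finite-step contraction with bounded control cost implies all admissible
sets are nonempty, with a uniform quadratic bound. -/
theorem contraction_implies_admissible
    {H U : Type*} [NormedAddCommGroup H] [InnerProductSpace ℝ H]
    [CompleteSpace H] [NormedAddCommGroup U] [InnerProductSpace ℝ U] [CompleteSpace U]
    (T : ℝ → H →L[ℝ] H) (hT0 : T 0 = 1)
    (hTadd : ∀ a b : ℝ, 0 ≤ a → 0 ≤ b → T (a + b) = T a ∘L T b)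
    (hTcont : ∀ x : H, ContinuousOn (fun τ : ℝ => T τ x) (Set.Ici (0 : ℝ)))
    (hbar : ℕ) (hhbar : 0 < hbar)
    (t : ℕ → ℝ) (ht0 : t 0 = 0) (htmono : StrictMono t)
    (htper : ∀ j : ℕ, t (j + hbar) = t j + t hbar)
    (B : ℕ → U →L[ℝ] H)
    (σ : ℝ) (hσ0 : 0 < σ) (hσ1 : σ < 1) (k : ℕ) (hk : 1 ≤ k) (C : ℝ) (hC : 0 < C)
    (hsteer : ∀ x0 : H, ∃ u : ℕ → U, Summable (fun j : ℕ => ‖u (j + 1)‖ ^ 2) ∧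
      ‖xtraj T t hbar B x0 u (k * hbar)‖ ≤ σ * ‖x0‖ ∧
      Real.sqrt (∑' j : ℕ, ‖u (j + 1)‖ ^ 2) ≤ C * ‖x0‖) :
    ∃ C' : ℝ, 0 < C' ∧ ∀ x0 : H, ∃ v : ℕ → U,
      Summable (fun j : ℕ => ‖v (j + 1)‖ ^ 2) ∧
      Summable (fun j : ℕ => ‖xtraj T t hbar B x0 v (j + 1)‖ ^ 2) ∧
      Real.sqrt (∑' j : ℕ, ‖v (j + 1)‖ ^ 2) ≤ C' * ‖x0‖ ∧
      (∑' j : ℕ, ‖xtraj T t hbar B x0 v (j + 1)‖ ^ 2) ≤ C' ^ 2 * ‖x0‖ ^ 2 ∧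
      v ∈ UadFrom T t hbar B 0 x0 := by
  classical
  have hN1 : 1 ≤ k * hbar := Nat.one_le_iff_ne_zero.mpr (Nat.mul_ne_zero (by omega) (by omega))
  set N := k * hbar with hNdef
  have hNpos : 0 < N := hN1
  obtain ⟨K, hK1, hKb⟩ := xtraj_norm_bound_uniform T t hbar B N
  have hσ2 : (0:ℝ) < σ ^ 2 := by positivity
  have hσ21 : σ ^ 2 < 1 := by nlinarith
  obtain ⟨G, hG0, hGsum, hGle⟩ := geo_div_bound hσ2 hσ21 N hN1
  set C' : ℝ := 1 + Real.sqrt (C ^ 2 * G) + Real.sqrt ((K * (1 + C)) ^ 2 * G) with hC'def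
  have hsq1 : C ^ 2 * G ≤ C' ^ 2 := by
    nlinarith [Real.sq_sqrt (show (0:ℝ) ≤ C ^ 2 * G by positivity),
      Real.sqrt_nonneg (C ^ 2 * G), Real.sqrt_nonneg ((K * (1 + C)) ^ 2 * G)]
  have hsq2 : (K * (1 + C)) ^ 2 * G ≤ C' ^ 2 := by
    nlinarith [Real.sq_sqrt (show (0:ℝ) ≤ (K * (1 + C)) ^ 2 * G by positivity),
      Real.sqrt_nonneg (C ^ 2 * G), Real.sqrt_nonneg ((K * (1 + C)) ^ 2 * G)]
  have hC'0 : 0 < C' := by positivity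
  refine ⟨C', hC'0, fun x0 => ?_⟩
  choose uu husum hucon hunorm using hsteer
  set x : ℕ → H := fun n => Nat.rec x0 (fun _ y => xtraj T t hbar B y (uu y) N) n with hxdef
  have hx0 : x 0 = x0 := rfl
  have hxs : ∀ n, x (n + 1) = xtraj T t hbar B (x n) (uu (x n)) N := fun n => rfl
  set w : ℕ → ℕ → U := fun n r => if r = N then 0 else uu (x n) r with hwdef
  set v : ℕ → U := fun j => if j = 0 then 0 else w ((j - 1) / N) (j - ((j - 1) / N) * N)
    with hvdef
  have hwv : ∀ n r, 1 ≤ r → r ≤ N → v (n * N + r) = w n r := by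
    intro n r h1 h2
    have hj0 : ¬ (n * N + r = 0) := by omega
    have hdiv : (n * N + r - 1) / N = n := by
      have h3 : n * N + r - 1 = (r - 1) + n * N := by omega
      rw [h3, Nat.add_mul_div_right _ _ hNpos, Nat.div_eq_of_lt (by omega), Nat.zero_add]
    have hsub : n * N + r - n * N = r := by omega
    simp only [hvdef]
    rw [if_neg hj0, hdiv, hsub]
  have hxdecay : ∀ n, ‖x n‖ ≤ σ ^ n * ‖x0‖ := by
    intro n
    induction n with
    | zero => simp [hx0]
    | succ n ih =>
        have h1 := hucon (x n)
        rw [← hxs n] at h1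
        calc ‖x (n + 1)‖ ≤ σ * ‖x n‖ := h1
          _ ≤ σ * (σ ^ n * ‖x0‖) := by nlinarith
          _ = σ ^ (n + 1) * ‖x0‖ := by ring
  have hdvd : hbar ∣ N := ⟨k, by rw [hNdef]; ring⟩
  have hdvdn : ∀ n : ℕ, hbar ∣ n * N := fun n => hdvd.mul_left n
  have hyx : ∀ n, xplusFrom T t hbar B 0 x0 v (n * N) = x n := by
    intro n
    induction n with
    | zero => rw [Nat.zero_mul]; rfl
    | succ n ih =>
        have h1 : (n + 1) * N = n * N + N := by ring
        rw [h1, xplusFrom_shift T t hbar B htper (n * N) (hdvdn n) x0 v N, ih, hxs n]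
        obtain ⟨M, hM⟩ : ∃ M, N = M + 1 := ⟨N - 1, by omega⟩
        have huw : ∀ j, 1 ≤ j → j ≤ M → v (n * N + j) = uu (x n) j := by
          intro j hj1 hj2
          rw [hwv n j hj1 (by omega), hwdef]
          simp only []
          rw [if_neg (by omega : ¬ (j = N))]
        have hwN : v (n * N + N) = 0 := by
          rw [hwv n N (by omega) (le_refl N), hwdef]
          simp
        rw [hM] at hwN huw ⊢
        rw [xplusFrom_succ]
        simp only [Nat.zero_add]
        beta_reduce
        rw [hwN, map_zero, add_zero]
        rw [show xtraj T t hbar B (x n) (uu (x n)) (M + 1)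
            = T (t (0 + M + 1) - t (0 + M)) (xplusFrom T t hbar B 0 (x n) (uu (x n)) M) from rfl]
        simp only [Nat.zero_add]
        congr 1
        exact xplusFrom_congr T t hbar B (x n) _ _ M (fun j hj1 hj2 => huw j hj1 hj2)
  have htrajeq : ∀ n m, 1 ≤ m → m ≤ N →
      xtrajFrom T t hbar B 0 x0 v (n * N + m) = xtrajFrom T t hbar B 0 (x n) (w n) m := by
    intro n m h1 h2
    obtain ⟨m', rfl⟩ : ∃ m', m = m' + 1 := ⟨m - 1, by omega⟩
    rw [show n * N + (m' + 1) = (n * N + m') + 1 from rfl, xtrajFrom_succ, xtrajFrom_succ]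
    simp only [Nat.zero_add]
    rw [t_diff_shift t hbar htper (n * N) m' (hdvdn n),
      xplusFrom_shift T t hbar B htper (n * N) (hdvdn n) x0 v m', hyx n]
    congr 1
    exact xplusFrom_congr T t hbar B (x n) _ _ m' (fun j hj1 hj2 =>
      hwv n j hj1 (by omega))
  have hwb : ∀ n r, 1 ≤ r → ‖w n r‖ ≤ C * (σ ^ n * ‖x0‖) := by
    intro n r hr
    have hxn := hxdecay n
    have hσn : (0:ℝ) ≤ σ ^ n * ‖x0‖ := by positivity
    have hCx : C * ‖x n‖ ≤ C * (σ ^ n * ‖x0‖) := by nlinarith [norm_nonneg (x n)]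
    by_cases h : r = N
    · rw [hwdef]; simp only [if_pos h, norm_zero]; positivity
    · rw [hwdef]; simp only [if_neg h]
      have h1 : ‖uu (x n) r‖ ≤ Real.sqrt (∑' j : ℕ, ‖uu (x n) (j + 1)‖ ^ 2) := by
        rw [Real.le_sqrt (norm_nonneg _) (tsum_nonneg (fun i => by positivity))]
        obtain ⟨r', rfl⟩ : ∃ r', r = r' + 1 := ⟨r - 1, by omega⟩
        exact Summable.le_tsum (husum (x n)) r' (fun i _ => by positivity)
      exact (h1.trans (hunorm (x n))).trans hCx
  have htb : ∀ n m, 1 ≤ m → m ≤ N →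
      ‖xtrajFrom T t hbar B 0 (x n) (w n) m‖ ≤ K * (1 + C) * (σ ^ n * ‖x0‖) := by
    intro n m h1 h2
    have hS : (0:ℝ) ≤ C * (σ ^ n * ‖x0‖) := by positivity
    have hb := hKb m h2 (x n) (w n) (C * (σ ^ n * ‖x0‖)) hS (fun j hj => hwb n j hj)
    have hxn := hxdecay n
    have hK0 : (0:ℝ) ≤ K := zero_le_one.trans hK1
    calc ‖xtrajFrom T t hbar B 0 (x n) (w n) m‖
        ≤ K * (‖x n‖ + C * (σ ^ n * ‖x0‖)) := hb
      _ ≤ K * (σ ^ n * ‖x0‖ + C * (σ ^ n * ‖x0‖)) :=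
          mul_le_mul_of_nonneg_left (add_le_add hxn le_rfl) hK0
      _ = K * (1 + C) * (σ ^ n * ‖x0‖) := by ring
  have hvb2 : ∀ j : ℕ, ‖v (j + 1)‖ ^ 2 ≤ C ^ 2 * ‖x0‖ ^ 2 * (σ ^ 2) ^ (j / N) := by
    intro j
    set n := j / N with hn
    have e1 : N * n + j % N = j := Nat.div_add_mod j N
    have e2 : j % N < N := Nat.mod_lt j hNpos
    have hle1 : n * N ≤ j := by
      calc n * N = N * n := by ring
        _ ≤ j := by omega
    have hlt : j < n * N + N := by
      calc j = N * n + j % N := e1.symm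
        _ < N * n + N := by omega
        _ = n * N + N := by ring
    set m := j + 1 - n * N with hm
    have hj1 : j + 1 = n * N + m := by omega
    have hveq : v (j + 1) = w n m := by
      rw [hj1]; exact hwv n m (by omega) (by omega)
    have hb : ‖v (j + 1)‖ ≤ C * (σ ^ n * ‖x0‖) := by
      rw [hveq]; exact hwb n m (by omega)
    calc ‖v (j + 1)‖ ^ 2 ≤ (C * (σ ^ n * ‖x0‖)) ^ 2 :=
          pow_le_pow_left₀ (norm_nonneg _) hb 2
      _ = C ^ 2 * ‖x0‖ ^ 2 * (σ ^ 2) ^ n := by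
          rw [mul_pow, mul_pow, pow_right_comm σ n 2]; ring
  have hxb2 : ∀ j : ℕ, ‖xtraj T t hbar B x0 v (j + 1)‖ ^ 2
      ≤ (K * (1 + C)) ^ 2 * ‖x0‖ ^ 2 * (σ ^ 2) ^ (j / N) := by
    intro j
    set n := j / N with hn
    have e1 : N * n + j % N = j := Nat.div_add_mod j N
    have e2 : j % N < N := Nat.mod_lt j hNpos
    have hle1 : n * N ≤ j := by
      calc n * N = N * n := by ring
        _ ≤ j := by omega
    have hlt : j < n * N + N := by
      calc j = N * n + j % N := e1.symm
        _ < N * n + N := by omega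
        _ = n * N + N := by ring
    set m := j + 1 - n * N with hm
    have hj1 : j + 1 = n * N + m := by omega
    have heq : xtraj T t hbar B x0 v (j + 1) = xtrajFrom T t hbar B 0 (x n) (w n) m := by
      show xtrajFrom T t hbar B 0 x0 v (j + 1) = _
      rw [hj1]
      exact htrajeq n m (by omega) (by omega)
    have hb : ‖xtraj T t hbar B x0 v (j + 1)‖ ≤ K * (1 + C) * (σ ^ n * ‖x0‖) := by
      rw [heq]; exact htb n m (by omega) (by omega)
    calc ‖xtraj T t hbar B x0 v (j + 1)‖ ^ 2 ≤ (K * (1 + C) * (σ ^ n * ‖x0‖)) ^ 2 :=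
          pow_le_pow_left₀ (norm_nonneg _) hb 2
      _ = (K * (1 + C)) ^ 2 * ‖x0‖ ^ 2 * (σ ^ 2) ^ n := by
          rw [show (K * (1 + C) * (σ ^ n * ‖x0‖)) ^ 2
              = (K * (1 + C)) ^ 2 * ‖x0‖ ^ 2 * (σ ^ n) ^ 2 by ring,
            pow_right_comm σ n 2]
  have hsumv : Summable (fun j : ℕ => ‖v (j + 1)‖ ^ 2) :=
    Summable.of_nonneg_of_le (fun j => by positivity) hvb2
      (hGsum.mul_left (C ^ 2 * ‖x0‖ ^ 2))
  have hsumx : Summable (fun j : ℕ => ‖xtraj T t hbar B x0 v (j + 1)‖ ^ 2) :=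
    Summable.of_nonneg_of_le (fun j => by positivity) hxb2
      (hGsum.mul_left ((K * (1 + C)) ^ 2 * ‖x0‖ ^ 2))
  have htsv : (∑' j : ℕ, ‖v (j + 1)‖ ^ 2) ≤ C ^ 2 * ‖x0‖ ^ 2 * G := by
    calc (∑' j : ℕ, ‖v (j + 1)‖ ^ 2)
        ≤ ∑' j : ℕ, C ^ 2 * ‖x0‖ ^ 2 * (σ ^ 2) ^ (j / N) :=
          Summable.tsum_le_tsum hvb2 hsumv (hGsum.mul_left _)
      _ = C ^ 2 * ‖x0‖ ^ 2 * ∑' j : ℕ, (σ ^ 2) ^ (j / N) := tsum_mul_left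
      _ ≤ C ^ 2 * ‖x0‖ ^ 2 * G :=
          mul_le_mul_of_nonneg_left hGle (by positivity)
  have htsx : (∑' j : ℕ, ‖xtraj T t hbar B x0 v (j + 1)‖ ^ 2)
      ≤ (K * (1 + C)) ^ 2 * ‖x0‖ ^ 2 * G := by
    calc (∑' j : ℕ, ‖xtraj T t hbar B x0 v (j + 1)‖ ^ 2)
        ≤ ∑' j : ℕ, (K * (1 + C)) ^ 2 * ‖x0‖ ^ 2 * (σ ^ 2) ^ (j / N) :=
          Summable.tsum_le_tsum hxb2 hsumx (hGsum.mul_left _)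
      _ = (K * (1 + C)) ^ 2 * ‖x0‖ ^ 2 * ∑' j : ℕ, (σ ^ 2) ^ (j / N) := tsum_mul_left
      _ ≤ (K * (1 + C)) ^ 2 * ‖x0‖ ^ 2 * G :=
          mul_le_mul_of_nonneg_left hGle (by positivity)
  have hfin1 : (∑' j : ℕ, ‖v (j + 1)‖ ^ 2) ≤ C' ^ 2 * ‖x0‖ ^ 2 := by
    refine htsv.trans ?_
    calc C ^ 2 * ‖x0‖ ^ 2 * G = (C ^ 2 * G) * ‖x0‖ ^ 2 := by ring
      _ ≤ C' ^ 2 * ‖x0‖ ^ 2 := mul_le_mul_of_nonneg_right hsq1 (sq_nonneg _)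
  have hfin2 : (∑' j : ℕ, ‖xtraj T t hbar B x0 v (j + 1)‖ ^ 2) ≤ C' ^ 2 * ‖x0‖ ^ 2 := by
    refine htsx.trans ?_
    calc (K * (1 + C)) ^ 2 * ‖x0‖ ^ 2 * G = ((K * (1 + C)) ^ 2 * G) * ‖x0‖ ^ 2 := by ring
      _ ≤ C' ^ 2 * ‖x0‖ ^ 2 := mul_le_mul_of_nonneg_right hsq2 (sq_nonneg _)
  refine ⟨v, hsumv, hsumx, ?_, hfin2, ?_, ?_⟩
  · calc Real.sqrt (∑' j : ℕ, ‖v (j + 1)‖ ^ 2)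
        ≤ Real.sqrt (C' ^ 2 * ‖x0‖ ^ 2) := Real.sqrt_le_sqrt hfin1
      _ = C' * ‖x0‖ := by
          rw [show C' ^ 2 * ‖x0‖ ^ 2 = (C' * ‖x0‖) ^ 2 by ring,
            Real.sqrt_sq (by positivity)]
  · show Summable (fun j : ℕ => ‖v (0 + j + 1)‖ ^ 2)
    simp only [Nat.zero_add]
    exact hsumv
  · exact hsumx

end ImpulseControl
end
end

section
/- Weak observability implies finite-step steering with bounded control cost. Suppose there exist σ ∈ (0,1), k ∈ ℕ⁺ and C > 0 such that ‖e^{A*t_{kħ}}φ‖_H ≤ C(Σ_{j=1}^{kħ−1} ‖B_{ν(j)}* e^{A*(t_{kħ}−t_j)}φ‖_U²)^{1/2} + σ‖φ‖_H for every φ ∈ H. Then for every x_0 ∈ H there exists a control u ∈ l²(ℕ⁺;U) such that ‖x(t_{kħ};x_0,u)‖_H ≤ σ‖x_0‖_H and ‖u‖_{l²(ℕ⁺;U)} ≤ 2C‖x_0‖_H. -/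
open scoped RealInnerProductSpace
noncomputable section

namespace ImpulseControl

variable {H U : Type*} [NormedAddCommGroup H] [InnerProductSpace ℝ H] [CompleteSpace H]
  [NormedAddCommGroup U] [InnerProductSpace ℝ U] [CompleteSpace U]

section Aux

variable {E F : Type*} [NormedAddCommGroup E] [InnerProductSpace ℝ E] [CompleteSpace E]
  [NormedAddCommGroup F] [InnerProductSpace ℝ F] [CompleteSpace F]

/-- reindexing a sum over `Icc 1 N` as a sum over `Fin N` -/
lemma sum_Icc_one_eq_sum_fin {M : Type*} [AddCommMonoid M] (f : ℕ → M) (N : ℕ) :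
    ∑ j ∈ Finset.Icc 1 N, f j = ∑ i : Fin N, f (i.1 + 1) := by
  rw [← Finset.Ico_add_one_right_eq_Icc, Finset.sum_Ico_eq_sum_range]
  rw [Fin.sum_univ_eq_sum_range (fun i => f (i + 1)) N]
  exact Finset.sum_congr rfl fun i _ => by rw [Nat.add_comm]

/-- approximate steering from the observability-type inequality, via projection onto the
closure of the image of the control ball -/
lemma approx_steer (L : E →L[ℝ] F) (z : F) (ρ c r : ℝ)
    (hρ : 0 ≤ ρ) (hc : 0 ≤ c) (hcr : c < r)
    (hz : ∀ φ : F, ⟪z, φ⟫ ≤ c * ‖ContinuousLinearMap.adjoint L φ‖ + ρ * ‖φ‖) :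
    ∀ ε : ℝ, 0 < ε → ∃ v : E, ‖v‖ ≤ r ∧ ‖z - L v‖ ≤ ρ + ε := by
  intro ε hε
  by_contra hcon
  push_neg at hcon
  have hr : 0 < r := lt_of_le_of_lt hc hcr
  set D := closure (L '' Metric.closedBall 0 r) with hD
  have hDconv : Convex ℝ D :=
    ((convex_closedBall (0 : E) r).linear_image (L : E →ₗ[ℝ] F)).closure
  have hDne : D.Nonempty :=
    ⟨L 0, subset_closure ⟨0, Metric.mem_closedBall_self hr.le, rfl⟩⟩
  have hDcl : IsClosed D := isClosed_closure
  obtain ⟨p, hpD, hpmin⟩ :=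
    exists_norm_eq_iInf_of_complete_convex hDne hDcl.isComplete hDconv z
  have hvar : ∀ w ∈ D, ⟪z - p, w - p⟫ ≤ 0 :=
    (norm_eq_iInf_iff_real_inner_le_zero hDconv hpD).1 hpmin
  set φ := z - p with hφ
  set d := ‖φ‖ with hdd
  -- distance from z to D is at least ρ + ε
  have hdist : ∀ y ∈ D, ρ + ε ≤ ‖z - y‖ := by
    intro y hy
    have hcl : IsClosed {y : F | ρ + ε ≤ ‖z - y‖} :=
      isClosed_le continuous_const ((continuous_const.sub continuous_id).norm)
    have himg : L '' Metric.closedBall 0 r ⊆ {y : F | ρ + ε ≤ ‖z - y‖} := by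
      rintro _ ⟨v, hv, rfl⟩
      rw [Metric.mem_closedBall, dist_zero_right] at hv
      exact le_of_lt (hcon v hv)
    exact closure_minimal himg hcl hy
  have hd : ρ + ε ≤ d := hdist p hpD
  have hd0 : 0 < d := lt_of_lt_of_le (by linarith) hd
  set w := ContinuousLinearMap.adjoint L φ with hw
  -- choose a control realizing the supremum of ⟪φ, L v⟫ over the ball
  obtain ⟨v, hvr, hvL⟩ : ∃ v : E, ‖v‖ ≤ r ∧ r * ‖w‖ ≤ ⟪φ, L v⟫ := by
    by_cases hw0 : w = 0
    · exact ⟨0, by simp [hr.le], by simp [hw0]⟩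
    · have hwn : (0 : ℝ) < ‖w‖ := norm_pos_iff.2 hw0
      refine ⟨(r / ‖w‖) • w, ?_, ?_⟩
      · rw [norm_smul, Real.norm_eq_abs, abs_of_nonneg (by positivity)]
        rw [div_mul_cancel₀ _ (ne_of_gt hwn)]
      · have h1 : ⟪φ, L ((r / ‖w‖) • w)⟫ = ⟪w, (r / ‖w‖) • w⟫ := by
          rw [ContinuousLinearMap.adjoint_inner_left]
        have hne : ‖w‖ ≠ 0 := ne_of_gt hwn
        rw [h1, real_inner_smul_right, real_inner_self_eq_norm_sq]
        apply le_of_eq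
        field_simp
  -- the variational inequality
  have hLvD : L v ∈ D := subset_closure ⟨v, by
    rw [Metric.mem_closedBall, dist_zero_right]; exact hvr, rfl⟩
  have h2 : ⟪φ, L v⟫ ≤ ⟪φ, p⟫ := by
    have := hvar (L v) hLvD
    rw [inner_sub_right] at this
    linarith
  have h3 : ⟪φ, p⟫ = ⟪φ, z⟫ - d ^ 2 := by
    have : p = z - φ := by rw [hφ]; abel
    rw [this, inner_sub_right, real_inner_self_eq_norm_sq, hdd]
  have h4 : ⟪φ, z⟫ ≤ c * ‖w‖ + ρ * d := by
    rw [real_inner_comm]; exact hz φ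
  have hwnn : 0 ≤ ‖w‖ := norm_nonneg w
  nlinarith [mul_nonneg (sub_nonneg.2 hcr.le) hwnn]

/-- exact steering from approximate steering: nested minimal-norm argument -/
lemma steer_of_approx (L : E →L[ℝ] F) (z : F) (ρ r : ℝ) (hρ : 0 ≤ ρ)
    (hA : ∀ ε : ℝ, 0 < ε → ∃ v : E, ‖v‖ ≤ r ∧ ‖z - L v‖ ≤ ρ + ε) :
    ∃ v : E, ‖v‖ ≤ r ∧ ‖z - L v‖ ≤ ρ := by
  set K : ℕ → Set E := fun n => {w : E | ‖w‖ ≤ r ∧ ‖z - L w‖ ≤ ρ + 1 / (n + 1)} with hK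
  have hKne : ∀ n : ℕ, (K n).Nonempty := by
    intro n
    obtain ⟨v, hv1, hv2⟩ := hA (1 / (n + 1)) (by positivity)
    exact ⟨v, hv1, hv2⟩
  have hr0 : 0 ≤ r := by
    obtain ⟨v0, hv0⟩ := hKne 0
    exact le_trans (norm_nonneg v0) hv0.1
  have hKcl : ∀ n : ℕ, IsClosed (K n) := by
    intro n
    have h1 : IsClosed {w : E | ‖w‖ ≤ r} := isClosed_le continuous_norm continuous_const
    have h2 : IsClosed {w : E | ‖z - L w‖ ≤ ρ + 1 / (n + 1)} :=
      isClosed_le ((continuous_const.sub L.continuous).norm) continuous_const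
    exact (h1.inter h2)
  have hKconv : ∀ n : ℕ, Convex ℝ (K n) := by
    intro n v hv w hw a b ha hb hab
    constructor
    · have hnrm : ‖a • v + b • w‖ ≤ a * ‖v‖ + b * ‖w‖ := by
        refine le_trans (norm_add_le _ _) ?_
        rw [norm_smul, norm_smul, Real.norm_eq_abs, Real.norm_eq_abs,
          abs_of_nonneg ha, abs_of_nonneg hb]
      have h1 := mul_le_mul_of_nonneg_left hv.1 ha
      have h2 := mul_le_mul_of_nonneg_left hw.1 hb
      have h3 : a * r + b * r = r := by rw [← add_mul, hab, one_mul]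
      linarith
    · have hzz : z - L (a • v + b • w) = a • (z - L v) + b • (z - L w) := by
        rw [map_add, map_smul, map_smul, smul_sub, smul_sub]
        have hz1 : a • z + b • z = z := by rw [← add_smul, hab, one_smul]
        conv_lhs => rw [← hz1]
        abel
      rw [hzz]
      have hnrm : ‖a • (z - L v) + b • (z - L w)‖ ≤ a * ‖z - L v‖ + b * ‖z - L w‖ := by
        refine le_trans (norm_add_le _ _) ?_
        rw [norm_smul, norm_smul, Real.norm_eq_abs, Real.norm_eq_abs,
          abs_of_nonneg ha, abs_of_nonneg hb]
      have h1 := mul_le_mul_of_nonneg_left hv.2 ha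
      have h2 := mul_le_mul_of_nonneg_left hw.2 hb
      have h3 : a * (ρ + 1 / ((n : ℝ) + 1)) + b * (ρ + 1 / ((n : ℝ) + 1))
          = ρ + 1 / ((n : ℝ) + 1) := by
        rw [← add_mul, hab, one_mul]
      linarith
  have hKmono : ∀ m n : ℕ, n ≤ m → K m ⊆ K n := by
    intro m n hnm w hwm
    refine ⟨hwm.1, le_trans hwm.2 ?_⟩
    have : (1 : ℝ) / (m + 1) ≤ 1 / (n + 1) := by
      apply one_div_le_one_div_of_le (by positivity)
      exact_mod_cast Nat.succ_le_succ hnm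
    linarith
  -- minimal norm elements
  have hmin : ∀ n : ℕ, ∃ v ∈ K n, ‖(0 : E) - v‖ = ⨅ w : K n, ‖(0 : E) - w‖ := fun n =>
    exists_norm_eq_iInf_of_complete_convex (hKne n) (hKcl n).isComplete (hKconv n) 0
  choose v hvK hvmin using hmin
  set δ : ℕ → ℝ := fun n => ‖v n‖ with hδ
  have hlow : ∀ n : ℕ, ∀ w ∈ K n, δ n ≤ ‖w‖ := by
    intro n w hw
    have h1 : δ n = ⨅ w : K n, ‖(0 : E) - w‖ := by
      rw [hδ]; simpa [zero_sub, norm_neg] using hvmin n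
    rw [h1]
    have := ciInf_le (f := fun w : K n => ‖(0 : E) - w‖)
      ⟨0, by rintro _ ⟨w', rfl⟩; positivity⟩ (⟨w, hw⟩ : K n)
    simpa [zero_sub, norm_neg] using this
  have hδr : ∀ n : ℕ, δ n ≤ r := fun n => (hvK n).1
  have hδ0 : ∀ n : ℕ, 0 ≤ δ n := fun n => norm_nonneg _
  have hδmono : ∀ m n : ℕ, n ≤ m → δ n ≤ δ m := fun m n h =>
    hlow n (v m) (hKmono m n h (hvK m))
  set δs : ℝ := ⨆ n, δ n with hδs
  have hbdd : BddAbove (Set.range δ) := ⟨r, by rintro _ ⟨n, rfl⟩; exact hδr n⟩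
  have hδsle : δs ≤ r := ciSup_le hδr
  have hδles : ∀ n, δ n ≤ δs := fun n => le_ciSup hbdd n
  have hδs0 : 0 ≤ δs := le_trans (hδ0 0) (hδles 0)
  -- Cauchy sequence of minimal norm elements
  have hcauchy : CauchySeq v := by
    rw [Metric.cauchySeq_iff]
    intro ε hε
    set ε' : ℝ := ε ^ 2 / (16 * (r + 1)) with hε'
    have hε'pos : 0 < ε' := by positivity
    obtain ⟨N, hN⟩ : ∃ N : ℕ, δs - ε' < δ N :=
      exists_lt_of_lt_ciSup (by linarith : δs - ε' < δs)
    refine ⟨N, fun m hm n hn => ?_⟩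
    set q := min m n with hq
    have hqN : N ≤ q := le_min hm hn
    have hmid : (2⁻¹ : ℝ) • v m + (2⁻¹ : ℝ) • v n ∈ K q := by
      refine hKconv q (hKmono m q (min_le_left _ _) (hvK m))
        (hKmono n q (min_le_right _ _) (hvK n)) (by norm_num) (by norm_num) (by norm_num)
    have hmid2 : δ q ≤ ‖(2⁻¹ : ℝ) • v m + (2⁻¹ : ℝ) • v n‖ := hlow q _ hmid
    have hvmvn : ‖v m + v n‖ = 2 * ‖(2⁻¹ : ℝ) • v m + (2⁻¹ : ℝ) • v n‖ := by
      rw [← smul_add, norm_smul, Real.norm_eq_abs,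
        abs_of_nonneg (by norm_num : (0:ℝ) ≤ 2⁻¹)]
      ring
    have hpar := parallelogram_law_with_norm ℝ (v m) (v n)
    have hsum : 2 * δ q ≤ ‖v m + v n‖ := by rw [hvmvn]; linarith
    have hkey : ‖v m - v n‖ ^ 2 ≤ 4 * δs ^ 2 - 4 * (δ N) ^ 2 := by
      have h1 : ‖v m‖ ≤ δs := hδles m
      have h2 : ‖v n‖ ≤ δs := hδles n
      have h3 : δ N ≤ δ q := hδmono q N hqN
      have h6 : 2 * δ N ≤ ‖v m + v n‖ := by linarith [hδ0 q, hsum]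
      have h7 : 0 ≤ δ N := hδ0 N
      have h8 : (0:ℝ) ≤ ‖v m‖ := norm_nonneg _
      have h9 : (0:ℝ) ≤ ‖v n‖ := norm_nonneg _
      nlinarith [hpar, mul_self_le_mul_self h8 h1, mul_self_le_mul_self h9 h2,
        mul_self_le_mul_self (by linarith : (0:ℝ) ≤ 2 * δ N) h6]
    have hfac : 4 * δs ^ 2 - 4 * (δ N) ^ 2 < ε ^ 2 := by
      have h1 : δs - δ N < ε' := by linarith
      have h2 : 0 ≤ δs - δ N := by linarith [hδles N]
      have h3 : δs + δ N ≤ 2 * r := by linarith [hδr N, hδles N, hδ0 N]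
      have h4 : (δs - δ N) * (δs + δ N) ≤ ε' * (2 * r) := by
        apply mul_le_mul h1.le h3 (by linarith [hδ0 N]) hε'pos.le
      have h5 : ε' * (2 * r) < ε ^ 2 / 4 := by
        rw [hε', div_mul_eq_mul_div,
          div_lt_div_iff₀ (by positivity : (0:ℝ) < 16 * (r + 1)) (by norm_num : (0:ℝ) < 4)]
        nlinarith [mul_pos hε hε]
      have h6 : 4 * δs ^ 2 - 4 * (δ N) ^ 2 = 4 * ((δs - δ N) * (δs + δ N)) := by ring
      linarith
    have : ‖v m - v n‖ ^ 2 < ε ^ 2 := lt_of_le_of_lt hkey hfac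
    have := lt_of_pow_lt_pow_left₀ 2 hε.le this
    rwa [dist_eq_norm]
  obtain ⟨vl, hvl⟩ := cauchySeq_tendsto_of_complete hcauchy
  have hvlK : ∀ n : ℕ, vl ∈ K n := by
    intro n
    refine (hKcl n).mem_of_tendsto hvl ?_
    filter_upwards [Filter.eventually_ge_atTop n] with m hm
    exact hKmono m n hm (hvK m)
  refine ⟨vl, (hvlK 0).1, ?_⟩
  by_contra hcon
  push_neg at hcon
  obtain ⟨n, hn⟩ := exists_nat_one_div_lt (show (0 : ℝ) < ‖z - L vl‖ - ρ by linarith)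
  have := (hvlK n).2
  linarith
/-- the core construction: steering to the ball of radius `σ‖x0‖` with finitely many controls -/
lemma exists_control (N : ℕ) (G : ℕ → E →L[ℝ] F) (S : F →L[ℝ] F) (x0 : F)
    (σ C : ℝ) (hσ : 0 ≤ σ) (hC : 0 < C) (hx0 : x0 ≠ 0)
    (hobs : ∀ φ : F, ‖ContinuousLinearMap.adjoint S φ‖ ≤
        C * Real.sqrt (∑ j ∈ Finset.Icc 1 N, ‖ContinuousLinearMap.adjoint (G j) φ‖ ^ 2)
          + σ * ‖φ‖) :
    ∃ w : ℕ → E, (∀ j : ℕ, (j < 1 ∨ N < j) → w j = 0) ∧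
      ‖S x0 + ∑ j ∈ Finset.Icc 1 N, G j (w j)‖ ≤ σ * ‖x0‖ ∧
      Real.sqrt (∑ j ∈ Finset.Icc 1 N, ‖w j‖ ^ 2) ≤ 2 * C * ‖x0‖ := by
  classical
  haveI : CompleteSpace (PiLp 2 (fun _ : Fin N => E)) :=
    inferInstance
  have hx0n : (0 : ℝ) < ‖x0‖ := norm_pos_iff.2 hx0
  -- the input operator on the product control space
  set Li : Fin N → E →L[ℝ] F := fun i => G (i.1 + 1) with hLi
  set L : PiLp 2 (fun _ : Fin N => E) →L[ℝ] F :=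
    ∑ i : Fin N, (Li i).comp (PiLp.proj 2 (fun _ : Fin N => E) i) with hL
  have hLapp : ∀ v : PiLp 2 (fun _ : Fin N => E), L v = ∑ i : Fin N, Li i (v i) := by
    intro v
    rw [hL, ContinuousLinearMap.sum_apply]
    exact Finset.sum_congr rfl fun i _ => rfl
  -- the adjoint of L, componentwise
  have hadj_comp : ∀ (φ : F) (i : Fin N),
      (ContinuousLinearMap.adjoint L φ) i = ContinuousLinearMap.adjoint (Li i) φ := by
    intro φ i
    apply ext_inner_right ℝ
    intro y
    set sy : PiLp 2 (fun _ : Fin N => E) := (WithLp.equiv 2 _).symm (Pi.single i y) with hsy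
    have hsyap : ∀ j : Fin N, sy j = (Pi.single i y : ∀ _ : Fin N, E) j := fun j => rfl
    have hcollapse : ∀ x : PiLp 2 (fun _ : Fin N => E), ⟪x, sy⟫ = ⟪x i, y⟫ := by
      intro x
      rw [PiLp.inner_apply]
      rw [Finset.sum_eq_single i (fun j _ hj => by
        rw [hsyap j, Pi.single_eq_of_ne hj, inner_zero_right]) (by simp)]
      rw [hsyap i, Pi.single_eq_same]
    have h1 : ⟪(ContinuousLinearMap.adjoint L φ) i, y⟫ = ⟪ContinuousLinearMap.adjoint L φ, sy⟫ :=
      (hcollapse _).symm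
    have h2 : ⟪ContinuousLinearMap.adjoint L φ, sy⟫ = ⟪φ, L sy⟫ :=
      ContinuousLinearMap.adjoint_inner_left L sy φ
    have h3 : L sy = Li i y := by
      rw [hLapp]
      rw [Finset.sum_eq_single i (fun j _ hj => by
        rw [hsyap j, Pi.single_eq_of_ne hj, map_zero]) (by simp)]
      rw [hsyap i, Pi.single_eq_same]
    rw [h1, h2, h3, ContinuousLinearMap.adjoint_inner_left]
  -- norm of the adjoint of L
  have hanorm : ∀ φ : F, ‖ContinuousLinearMap.adjoint L φ‖
      = Real.sqrt (∑ j ∈ Finset.Icc 1 N, ‖ContinuousLinearMap.adjoint (G j) φ‖ ^ 2) := by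
    intro φ
    rw [PiLp.norm_eq_of_L2]
    congr 1
    rw [sum_Icc_one_eq_sum_fin (fun j => ‖ContinuousLinearMap.adjoint (G j) φ‖ ^ 2) N]
    exact Finset.sum_congr rfl fun i _ => by rw [hadj_comp φ i]
  -- the observability inequality in dual form
  set z : F := -(S x0) with hz
  have hzineq : ∀ φ : F, ⟪z, φ⟫ ≤ (C * ‖x0‖) * ‖ContinuousLinearMap.adjoint L φ‖
      + (σ * ‖x0‖) * ‖φ‖ := by
    intro φ
    have h1 : ⟪z, φ⟫ = -⟪x0, ContinuousLinearMap.adjoint S φ⟫ := by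
      rw [hz, inner_neg_left, ContinuousLinearMap.adjoint_inner_right]
    have h2 : -⟪x0, ContinuousLinearMap.adjoint S φ⟫
        ≤ ‖x0‖ * ‖ContinuousLinearMap.adjoint S φ‖ := by
      have := abs_real_inner_le_norm x0 (ContinuousLinearMap.adjoint S φ)
      have h3 := neg_abs_le ⟪x0, ContinuousLinearMap.adjoint S φ⟫
      linarith
    have h4 := hobs φ
    have h5 : ‖x0‖ * ‖ContinuousLinearMap.adjoint S φ‖
        ≤ ‖x0‖ * (C * Real.sqrt (∑ j ∈ Finset.Icc 1 N,
            ‖ContinuousLinearMap.adjoint (G j) φ‖ ^ 2) + σ * ‖φ‖) :=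
      mul_le_mul_of_nonneg_left h4 (norm_nonneg x0)
    rw [← hanorm φ] at h5
    rw [h1]
    calc -⟪x0, ContinuousLinearMap.adjoint S φ⟫
        ≤ ‖x0‖ * (C * ‖ContinuousLinearMap.adjoint L φ‖ + σ * ‖φ‖) := le_trans h2 h5
      _ = (C * ‖x0‖) * ‖ContinuousLinearMap.adjoint L φ‖ + (σ * ‖x0‖) * ‖φ‖ := by ring
  -- steering in the product space
  obtain ⟨v, hvnorm, hvsteer⟩ :=
    steer_of_approx L z (σ * ‖x0‖) (2 * C * ‖x0‖) (by positivity)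
      (approx_steer L z (σ * ‖x0‖) (C * ‖x0‖) (2 * C * ‖x0‖) (by positivity) (by positivity)
        (by nlinarith) hzineq)
  -- transfer back to a finitely supported sequence of controls
  refine ⟨fun j => if h : 1 ≤ j ∧ j ≤ N then v ⟨j - 1, by omega⟩ else 0, ?_, ?_, ?_⟩
  · intro j hj
    have hneg : ¬(1 ≤ j ∧ j ≤ N) := by omega
    exact dif_neg hneg
  · have hsum : ∑ j ∈ Finset.Icc 1 N,
        G j ((fun j => if h : 1 ≤ j ∧ j ≤ N then v ⟨j - 1, by omega⟩ else 0) j) = L v := by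
      rw [sum_Icc_one_eq_sum_fin
        (fun j => G j (if h : 1 ≤ j ∧ j ≤ N then v ⟨j - 1, by omega⟩ else 0)) N, hLapp]
      refine Finset.sum_congr rfl fun i _ => ?_
      have hcond : 1 ≤ i.1 + 1 ∧ i.1 + 1 ≤ N := ⟨by omega, by omega⟩
      rw [dif_pos hcond]
      congr 1
    rw [hsum]
    have : S x0 + L v = -(z - L v) := by rw [hz]; abel
    rw [this, norm_neg]
    exact hvsteer
  · have hsum2 : ∑ j ∈ Finset.Icc 1 N,
        ‖(fun j => if h : 1 ≤ j ∧ j ≤ N then v ⟨j - 1, by omega⟩ else 0) j‖ ^ 2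
        = ‖v‖ ^ 2 := by
      rw [PiLp.norm_sq_eq_of_L2]
      rw [sum_Icc_one_eq_sum_fin
        (fun j => ‖if h : 1 ≤ j ∧ j ≤ N then v ⟨j - 1, by omega⟩ else 0‖ ^ 2) N]
      refine Finset.sum_congr rfl fun i _ => ?_
      have hcond : 1 ≤ i.1 + 1 ∧ i.1 + 1 ≤ N := ⟨by omega, by omega⟩
      rw [dif_pos hcond]
      congr 2
    rw [hsum2, Real.sqrt_sq (norm_nonneg v)]
    exact hvnorm

section Traj

/-- pushing the semigroup through the variation-of-constants sum -/
lemma push_formula (T : ℝ → H →L[ℝ] H) (hT0 : T 0 = 1)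
    (hTadd : ∀ a b : ℝ, 0 ≤ a → 0 ≤ b → T (a + b) = T a ∘L T b)
    (t : ℕ → ℝ) (ht0 : t 0 = 0) (hmono : Monotone t) (m : ℕ) (x0 : H) (y : ℕ → H) :
    T (t (m + 1) - t m) (T (t m) x0 + ∑ j ∈ Finset.Icc 1 m, T (t m - t j) (y j))
      = T (t (m + 1)) x0 + ∑ j ∈ Finset.Icc 1 m, T (t (m + 1) - t j) (y j) := by
  have ht0le : ∀ j : ℕ, 0 ≤ t j := fun j => ht0 ▸ hmono (Nat.zero_le j)
  have hd : 0 ≤ t (m + 1) - t m := sub_nonneg.2 (hmono (Nat.le_succ m))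
  rw [map_add]
  congr 1
  · have h := hTadd (t (m + 1) - t m) (t m) hd (ht0le m)
    rw [sub_add_cancel] at h
    rw [h]; rfl
  · rw [map_sum]
    refine Finset.sum_congr rfl fun j hj => ?_
    have hjm : j ≤ m := (Finset.mem_Icc.1 hj).2
    have hdj : 0 ≤ t m - t j := sub_nonneg.2 (hmono hjm)
    have h := hTadd (t (m + 1) - t m) (t m - t j) hd hdj
    have heq : t (m + 1) - t m + (t m - t j) = t (m + 1) - t j := by ring
    rw [heq] at h
    rw [h]; rfl

/-- closed form for the post-impulse states -/
lemma xplus_formula (T : ℝ → H →L[ℝ] H) (hT0 : T 0 = 1)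
    (hTadd : ∀ a b : ℝ, 0 ≤ a → 0 ≤ b → T (a + b) = T a ∘L T b)
    (t : ℕ → ℝ) (ht0 : t 0 = 0) (hmono : Monotone t)
    (hbar : ℕ) (B : ℕ → U →L[ℝ] H) (x0 : H) (u : ℕ → U) :
    ∀ m : ℕ, xplusFrom T t hbar B 0 x0 u m
      = T (t m) x0 + ∑ j ∈ Finset.Icc 1 m, T (t m - t j) (B (nu hbar j) (u j)) := by
  intro m
  induction m with
  | zero => simp [xplusFrom, ht0, hT0]
  | succ m ih =>
    have hstep : xplusFrom T t hbar B 0 x0 u (m + 1)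
        = T (t (m + 1) - t m) (xplusFrom T t hbar B 0 x0 u m)
          + B (nu hbar (m + 1)) (u (m + 1)) := by
      simp [xplusFrom]
    rw [hstep, ih, push_formula T hT0 hTadd t ht0 hmono m x0 _]
    rw [Finset.sum_Icc_succ_top (Nat.succ_le_succ (Nat.zero_le m))]
    have htop : T (t (m + 1) - t (m + 1)) (B (nu hbar (m + 1)) (u (m + 1)))
        = B (nu hbar (m + 1)) (u (m + 1)) := by
      rw [sub_self, hT0]; rfl
    rw [htop]
    abel

/-- closed form for the pre-impulse states -/
lemma xtraj_formula (T : ℝ → H →L[ℝ] H) (hT0 : T 0 = 1)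
    (hTadd : ∀ a b : ℝ, 0 ≤ a → 0 ≤ b → T (a + b) = T a ∘L T b)
    (t : ℕ → ℝ) (ht0 : t 0 = 0) (hmono : Monotone t)
    (hbar : ℕ) (B : ℕ → U →L[ℝ] H) (x0 : H) (u : ℕ → U) (m : ℕ) :
    xtraj T t hbar B x0 u (m + 1)
      = T (t (m + 1)) x0 + ∑ j ∈ Finset.Icc 1 m, T (t (m + 1) - t j) (B (nu hbar j) (u j)) := by
  have hstep : xtraj T t hbar B x0 u (m + 1)
      = T (t (m + 1) - t m) (xplusFrom T t hbar B 0 x0 u m) := by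
    simp [xtraj, xtrajFrom]
  rw [hstep, xplus_formula T hT0 hTadd t ht0 hmono hbar B x0 u m,
    push_formula T hT0 hTadd t ht0 hmono m x0 _]

end Traj

end Aux

/-- Weak observability implies finite-step steering with control cost `2C‖x0‖`. -/
theorem weak_observability_implies_steering
    {H U : Type*} [NormedAddCommGroup H] [InnerProductSpace ℝ H]
    [CompleteSpace H] [NormedAddCommGroup U] [InnerProductSpace ℝ U] [CompleteSpace U]
    (T : ℝ → H →L[ℝ] H) (hT0 : T 0 = 1)
    (hTadd : ∀ a b : ℝ, 0 ≤ a → 0 ≤ b → T (a + b) = T a ∘L T b)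
    (hTcont : ∀ x : H, ContinuousOn (fun τ : ℝ => T τ x) (Set.Ici (0 : ℝ)))
    (hbar : ℕ) (hhbar : 0 < hbar)
    (t : ℕ → ℝ) (ht0 : t 0 = 0) (htmono : StrictMono t)
    (htper : ∀ j : ℕ, t (j + hbar) = t j + t hbar)
    (B : ℕ → U →L[ℝ] H)
    (σ : ℝ) (hσ0 : 0 < σ) (hσ1 : σ < 1) (k : ℕ) (hk : 1 ≤ k) (C : ℝ) (hC : 0 < C)
    (hobs : ∀ φ : H,
      ‖adj (T (t (k * hbar))) φ‖ ≤
        C * Real.sqrt (∑ j ∈ Finset.Icc 1 (k * hbar - 1),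
            ‖adj (B (nu hbar j)) (adj (T (t (k * hbar) - t j)) φ)‖ ^ 2)
          + σ * ‖φ‖) :
    ∀ x0 : H, ∃ u : ℕ → U, Summable (fun j : ℕ => ‖u (j + 1)‖ ^ 2) ∧
      ‖xtraj T t hbar B x0 u (k * hbar)‖ ≤ σ * ‖x0‖ ∧
      Real.sqrt (∑' j : ℕ, ‖u (j + 1)‖ ^ 2) ≤ 2 * C * ‖x0‖ := by
  intro x0
  have hmono : Monotone t := htmono.monotone
  have hn1 : 1 ≤ k * hbar := Nat.one_le_iff_ne_zero.2 (Nat.mul_ne_zero (by omega) (by omega))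
  set N : ℕ := k * hbar - 1 with hN
  have hN1 : N + 1 = k * hbar := by omega
  by_cases hx0 : x0 = 0
  · refine ⟨0, by simpa using summable_zero, ?_, ?_⟩
    · rw [← hN1, xtraj_formula T hT0 hTadd t ht0 hmono hbar B x0 0 N]
      simp [hx0]
    · simp
      positivity
  · -- apply the core construction
    set G : ℕ → U →L[ℝ] H := fun j => (T (t (k * hbar) - t j)).comp (B (nu hbar j)) with hG
    set S : H →L[ℝ] H := T (t (k * hbar)) with hS
    have hobs' : ∀ φ : H, ‖ContinuousLinearMap.adjoint S φ‖ ≤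
        C * Real.sqrt (∑ j ∈ Finset.Icc 1 N, ‖ContinuousLinearMap.adjoint (G j) φ‖ ^ 2)
          + σ * ‖φ‖ := by
      intro φ
      have h := hobs φ
      simp only [adj] at h
      have hrw : ∀ j : ℕ, ContinuousLinearMap.adjoint (B (nu hbar j))
          (ContinuousLinearMap.adjoint (T (t (k * hbar) - t j)) φ)
          = ContinuousLinearMap.adjoint (G j) φ := by
        intro j
        simp only [hG, ContinuousLinearMap.adjoint_comp, ContinuousLinearMap.coe_comp',
          Function.comp_apply]
      simp only [hrw] at h
      exact h
    obtain ⟨w, hw0, hwsteer, hwnorm⟩ :=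
      exists_control N G S x0 σ C hσ0.le hC hx0 hobs'
    refine ⟨w, ?_, ?_, ?_⟩
    · refine summable_of_ne_finset_zero (s := Finset.range N) fun j hj => ?_
      rw [Finset.mem_range, not_lt] at hj
      rw [hw0 (j + 1) (Or.inr (by omega))]
      simp
    · rw [← hN1, xtraj_formula T hT0 hTadd t ht0 hmono hbar B x0 w N, hN1]
      exact hwsteer
    · have htsum : ∑' j : ℕ, ‖w (j + 1)‖ ^ 2 = ∑ j ∈ Finset.Icc 1 N, ‖w j‖ ^ 2 := by
        rw [tsum_eq_sum (s := Finset.range N) (fun j hj => by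
          rw [Finset.mem_range, not_lt] at hj
          rw [hw0 (j + 1) (Or.inr (by omega))]
          simp)]
        rw [sum_Icc_one_eq_sum_fin (fun j => ‖w j‖ ^ 2) N,
          Fin.sum_univ_eq_sum_range (fun i => ‖w (i + 1)‖ ^ 2) N]
      rw [htsum]
      exact hwnorm

end ImpulseControl
end
end

section
/- Kalman controllability decomposition. Let n, p ∈ ℕ⁺, S ∈ ℝ^{n×n}, D ∈ ℝ^{n×p}, and n_1 ∈ ℕ⁺ with n_1 < n. The following statements are equivalent: (i) rank(D, SD, S²D, …, S^{n−1}D) = n_1; (ii) there exists an invertible matrix J ∈ ℝ^{n×n} such that J⁻¹SJ has the block form [[S_1, S_2],[0, S_3]] and J⁻¹D has the block form [D̃; 0], where S_1 ∈ ℝ^{n_1×n_1}, S_2 ∈ ℝ^{n_1×(n−n_1)}, S_3 ∈ ℝ^{(n−n_1)×(n−n_1)}, D̃ ∈ ℝ^{n_1×p}, and rank(D̃, S_1D̃, …, S_1^{n_1−1}D̃) = n_1. -/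
noncomputable section

namespace ImpulseMat

open Matrix

/-- the controllability matrix `(F, EF, E²F, …, E^{k-1}F)` (columns indexed by
`Fin k × Fin l`). -/
def ctrb {k l : ℕ} (E : Matrix (Fin k) (Fin k) ℝ) (F : Matrix (Fin k) (Fin l) ℝ) :
    Matrix (Fin k) (Fin k × Fin l) ℝ :=
  Matrix.of fun i jc => (E ^ (jc.1 : ℕ) * F) i jc.2

/-- `q(E,F)`: the maximum over columns `f` of `F` of `dim span{f, Ef, …, E^{k-1}f}`. -/
def qEF {k l : ℕ} (E : Matrix (Fin k) (Fin k) ℝ) (F : Matrix (Fin k) (Fin l) ℝ) : ℕ :=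
  Finset.univ.sup fun c : Fin l =>
    Module.finrank ℝ (Submodule.span ℝ
      (Set.range fun i : Fin k => (E ^ (i : ℕ)).mulVec fun r => F r c))

/-- the complexification of a real matrix -/
def cplx {a b : ℕ} (M : Matrix (Fin a) (Fin b) ℝ) : Matrix (Fin a) (Fin b) ℂ :=
  M.map (algebraMap ℝ ℂ)

/-- the canonical equivalence `Fin n1 ⊕ Fin (n - n1) ≃ Fin n` (for `n1 ≤ n`). -/
def sumFinEquiv (n n1 : ℕ) (h : n1 ≤ n) : Fin n1 ⊕ Fin (n - n1) ≃ Fin n :=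
  finSumFinEquiv.trans (finCongr (Nat.add_sub_cancel' h))

section Chain

variable {E : Type*} [AddCommGroup E] [Module ℝ E]

/-- generators `f^i x`, `x ∈ s`, `i < j`. -/
def wSet (f : Module.End ℝ E) (s : Set E) (j : ℕ) : Set E :=
  {v | ∃ i < j, ∃ x ∈ s, v = (f ^ i) x}

/-- span of the generators `f^i x`, `x ∈ s`, `i < j`. -/
def Wc (f : Module.End ℝ E) (s : Set E) (j : ℕ) : Submodule ℝ E :=
  Submodule.span ℝ (wSet f s j)

lemma Wc_mono (f : Module.End ℝ E) (s : Set E) {j k : ℕ} (h : j ≤ k) :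
    Wc f s j ≤ Wc f s k := by
  apply Submodule.span_mono
  rintro v ⟨i, hi, x, hx, rfl⟩
  exact ⟨i, lt_of_lt_of_le hi h, x, hx, rfl⟩

lemma Wc_succ (f : Module.End ℝ E) (s : Set E) (j : ℕ) :
    Wc f s (j + 1) = Wc f s 1 ⊔ (Wc f s j).map f := by
  apply le_antisymm
  · rw [Wc, Submodule.span_le]
    rintro v ⟨i, hi, x, hx, rfl⟩
    rcases i with _ | k
    · exact Submodule.mem_sup_left (Submodule.subset_span ⟨0, by omega, x, hx, rfl⟩)
    · apply Submodule.mem_sup_right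
      have hk : (f ^ k) x ∈ Wc f s j := Submodule.subset_span ⟨k, by omega, x, hx, rfl⟩
      exact ⟨(f ^ k) x, hk, by rw [pow_succ']; rfl⟩
  · apply sup_le (Wc_mono f s (by omega))
    rw [Wc, Wc, Submodule.map_span, Submodule.span_le]
    rintro v ⟨w, ⟨i, hi, x, hx, rfl⟩, rfl⟩
    exact Submodule.subset_span ⟨i + 1, by omega, x, hx, by rw [pow_succ']; rfl⟩

lemma Wc_stab (f : Module.End ℝ E) (s : Set E) {j : ℕ}
    (hj : Wc f s j = Wc f s (j + 1)) : ∀ k, Wc f s (j + k) = Wc f s j := by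
  intro k; induction k with
  | zero => rfl
  | succ k ih =>
    rw [show j + (k + 1) = (j + k) + 1 by omega, Wc_succ, ih, ← Wc_succ, ← hj]

lemma Wc_dichotomy [FiniteDimensional ℝ E] (f : Module.End ℝ E) (s : Set E) :
    ∀ m : ℕ, m ≤ Module.finrank ℝ (Wc f s m) ∨ ∀ k, Wc f s (m + k) = Wc f s m := by
  intro m; induction m with
  | zero => exact Or.inl (Nat.zero_le _)
  | succ m ih =>
    rcases ih with hrank | hstab
    · by_cases heq : Wc f s m = Wc f s (m + 1)
      · right; intro k
        rw [show m + 1 + k = m + (1 + k) by omega, Wc_stab f s heq, ← Wc_stab f s heq 1]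
      · left
        have hlt : Wc f s m < Wc f s (m + 1) :=
          lt_of_le_of_ne (Wc_mono f s (by omega)) heq
        have := Submodule.finrank_lt_finrank_of_lt hlt
        omega
    · right; intro k
      rw [show m + 1 + k = m + (1 + k) by omega, hstab, ← hstab 1]

lemma Wc_ge [FiniteDimensional ℝ E] (f : Module.End ℝ E) (s : Set E) {m : ℕ}
    (hm : Module.finrank ℝ E ≤ m) :
    Wc f s m = Wc f s (Module.finrank ℝ E) := by
  rcases Wc_dichotomy f s (Module.finrank ℝ E) with hrank | hstab
  · have h1 : Module.finrank ℝ (Wc f s (Module.finrank ℝ E)) ≤ Module.finrank ℝ E :=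
      Submodule.finrank_le _
    have htop : Wc f s (Module.finrank ℝ E) = ⊤ :=
      Submodule.eq_top_of_finrank_eq (le_antisymm h1 hrank)
    have h2 : Wc f s m = ⊤ := top_unique (htop ▸ Wc_mono f s hm)
    rw [h2, htop]
  · have := hstab (m - Module.finrank ℝ E)
    rwa [show Module.finrank ℝ E + (m - Module.finrank ℝ E) = m by omega] at this

lemma Wc_map_le [FiniteDimensional ℝ E] (f : Module.End ℝ E) (s : Set E) {m : ℕ}
    (hm : Module.finrank ℝ E ≤ m) : (Wc f s m).map f ≤ Wc f s m := by
  have h1 : Wc f s (m + 1) = Wc f s m := by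
    rw [Wc_ge f s hm, Wc_ge f s (hm.trans (Nat.le_succ m))]
  have h2 : (Wc f s m).map f ≤ Wc f s (m + 1) := by
    rw [Wc_succ]; exact le_sup_right
  rwa [h1] at h2

end Chain

section CtrbRank

lemma mulVecLin_pow {k : ℕ} (S : Matrix (Fin k) (Fin k) ℝ) (i : ℕ) :
    S.mulVecLin ^ i = (S ^ i).mulVecLin := by
  induction i with
  | zero => rw [pow_zero, pow_zero, Matrix.mulVecLin_one]; rfl
  | succ i ih => rw [pow_succ, pow_succ, Matrix.mulVecLin_mul, ih]; rfl

lemma ctrb_col {k l : ℕ} (S : Matrix (Fin k) (Fin k) ℝ) (D : Matrix (Fin k) (Fin l) ℝ)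
    (i : Fin k) (c : Fin l) :
    (ctrb S D)ᵀ (i, c) = (S.mulVecLin ^ (i : ℕ)) (Dᵀ c) := by
  funext r
  simp [ctrb, mulVecLin_pow, Matrix.mulVecLin_apply, Matrix.mul_apply, Matrix.mulVec,
    dotProduct, Matrix.transpose_apply]

lemma span_pow_cols {k l m : ℕ} (S1 : Matrix (Fin k) (Fin k) ℝ)
    (Dt : Matrix (Fin k) (Fin l) ℝ) :
    Submodule.span ℝ (Set.range fun ic : Fin m × Fin l =>
        (S1.mulVecLin ^ (ic.1 : ℕ)) (Dtᵀ ic.2)) = Wc S1.mulVecLin (Set.range Dtᵀ) m := by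
  unfold Wc
  congr 1
  ext v
  constructor
  · rintro ⟨⟨i, c⟩, rfl⟩
    exact ⟨(i : ℕ), i.isLt, Dtᵀ c, ⟨c, rfl⟩, rfl⟩
  · rintro ⟨i, hi, x, ⟨c, rfl⟩, rfl⟩
    exact ⟨(⟨i, hi⟩, c), rfl⟩

lemma rank_ctrb {k l : ℕ} (S : Matrix (Fin k) (Fin k) ℝ) (D : Matrix (Fin k) (Fin l) ℝ) :
    (ctrb S D).rank = Module.finrank ℝ (Wc S.mulVecLin (Set.range Dᵀ) k) := by
  have hfun : (ctrb S D)ᵀ = fun ic : Fin k × Fin l =>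
      (S.mulVecLin ^ (ic.1 : ℕ)) (Dᵀ ic.2) :=
    funext fun ic => ctrb_col S D ic.1 ic.2
  rw [Matrix.rank_eq_finrank_span_cols, Matrix.col, hfun, span_pow_cols]

end CtrbRank

/-- padding a vector of length `n1` with zeros to length `n` -/
def padL (n n1 : ℕ) (h : n1 ≤ n) : (Fin n1 → ℝ) →ₗ[ℝ] (Fin n → ℝ) where
  toFun v := fun i => Sum.elim v (fun _ => (0 : ℝ)) ((sumFinEquiv n n1 h).symm i)
  map_add' v w := by
    funext i
    rcases hh : (sumFinEquiv n n1 h).symm i with u | u <;> simp [hh]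
  map_smul' a v := by
    funext i
    rcases hh : (sumFinEquiv n n1 h).symm i with u | u <;> simp [hh]

lemma padL_apply (n n1 : ℕ) (h : n1 ≤ n) (v : Fin n1 → ℝ) (i : Fin n) :
    padL n n1 h v i = Sum.elim v (fun _ => (0 : ℝ)) ((sumFinEquiv n n1 h).symm i) := rfl

lemma padL_injective (n n1 : ℕ) (h : n1 ≤ n) : Function.Injective (padL n n1 h) := by
  intro v w hvw
  funext j
  have h5 := congrFun hvw (sumFinEquiv n n1 h (Sum.inl j))
  rw [padL_apply, padL_apply, Equiv.symm_apply_apply, Sum.elim_inl, Sum.elim_inl] at h5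
  exact h5

/-- Lemma 4.3 (Kalman controllability decomposition). -/
theorem kalman_decomposition
    {n p : ℕ} (hp : 0 < p) (n1 : ℕ) (hn1 : 1 ≤ n1) (h : n1 < n)
    (S : Matrix (Fin n) (Fin n) ℝ) (D : Matrix (Fin n) (Fin p) ℝ) :
    (ctrb S D).rank = n1 ↔
      ∃ (J : Matrix (Fin n) (Fin n) ℝ) (S1 : Matrix (Fin n1) (Fin n1) ℝ)
        (S2 : Matrix (Fin n1) (Fin (n - n1)) ℝ)
        (S3 : Matrix (Fin (n - n1)) (Fin (n - n1)) ℝ)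
        (Dt : Matrix (Fin n1) (Fin p) ℝ),
        IsUnit J ∧
        J⁻¹ * S * J =
          (Matrix.fromBlocks S1 S2 0 S3).submatrix
            (sumFinEquiv n n1 h.le).symm (sumFinEquiv n n1 h.le).symm ∧
        J⁻¹ * D =
          (Matrix.of (Sum.elim (fun i : Fin n1 => Dt i)
            (fun _ : Fin (n - n1) => (0 : Fin p → ℝ)))).submatrix
              (sumFinEquiv n n1 h.le).symm id ∧
        (ctrb S1 Dt).rank = n1 := by
  classical
  have hfr : Module.finrank ℝ (Fin n → ℝ) = n := Module.finrank_fin_fun ℝ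
  have hfr1 : Module.finrank ℝ (Fin n1 → ℝ) = n1 := Module.finrank_fin_fun ℝ
  set σ := sumFinEquiv n n1 h.le with hσdef
  constructor
  · -- forward direction
    intro hrank
    set f := S.mulVecLin with hf
    set s := Set.range Dᵀ with hs
    set V := Wc f s n with hVdef
    have hV : Module.finrank ℝ V = n1 := by
      rw [rank_ctrb] at hrank; exact hrank
    have hfV : V.map f ≤ V := Wc_map_le f s (by rw [hfr])
    have hfmem : ∀ x ∈ V, f x ∈ V := fun x hx => hfV (Submodule.mem_map_of_mem hx)
    have hd : ∀ c, Dᵀ c ∈ V := by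
      intro c
      apply Submodule.subset_span
      exact ⟨0, by omega, Dᵀ c, ⟨c, rfl⟩, by rw [pow_zero]; rfl⟩
    have hVn1 : Wc f s n1 = V := by
      rcases Wc_dichotomy f s n1 with h1 | h2
      · exact Submodule.eq_of_le_of_finrank_le (Wc_mono f s h.le) (by rw [hV]; exact h1)
      · have := h2 (n - n1)
        rw [show n1 + (n - n1) = n by omega] at this
        exact this.symm
    obtain ⟨Wp, hc⟩ := Submodule.exists_isCompl V
    have hWp : Module.finrank ℝ Wp = n - n1 := by
      have hsum := Submodule.finrank_add_eq_of_isCompl hc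
      rw [hV, hfr] at hsum
      omega
    set bV := Module.finBasisOfFinrankEq ℝ V hV with hbV
    set bW := Module.finBasisOfFinrankEq ℝ Wp hWp with hbW
    set φ := Submodule.prodEquivOfIsCompl V Wp hc with hφ
    set bS := (bV.prod bW).map φ with hbS
    set b := bS.reindex σ with hb
    -- coordinate facts
    have hsymm : ∀ v (hv : v ∈ V), φ.symm v = ((⟨v, hv⟩ : V), (0 : Wp)) := by
      intro v hv
      rw [LinearEquiv.symm_apply_eq, hφ, Submodule.coe_prodEquivOfIsCompl']
      simp
    have repr_inr : ∀ v, v ∈ V → ∀ i : Fin (n - n1), bS.repr v (Sum.inr i) = 0 := by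
      intro v hv i
      rw [hbS, Module.Basis.map_repr, LinearEquiv.trans_apply, hsymm v hv, Module.Basis.prod_repr_inr]
      simp
    have repr_inl : ∀ v (hv : v ∈ V) (i : Fin n1),
        bS.repr v (Sum.inl i) = bV.repr (⟨v, hv⟩ : V) i := by
      intro v hv i
      rw [hbS, Module.Basis.map_repr, LinearEquiv.trans_apply, hsymm v hv, Module.Basis.prod_repr_inl]
    have hbSl : ∀ j : Fin n1, bS (Sum.inl j) = (bV j : Fin n → ℝ) := by
      intro j
      rw [hbS, Module.Basis.map_apply]
      have : (bV.prod bW) (Sum.inl j) = (bV j, 0) :=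
        Prod.ext (Module.Basis.prod_apply_inl_fst bV bW j) (Module.Basis.prod_apply_inl_snd bV bW j)
      rw [this, hφ, Submodule.coe_prodEquivOfIsCompl']
      simp
    have hbSV : ∀ j : Fin n1, bS (Sum.inl j) ∈ V := by
      intro j; rw [hbSl]; exact (bV j).2
    -- matrix of f in basis bS
    set M := LinearMap.toMatrix bS bS f with hMdef
    have hM21 : ∀ (i : Fin (n - n1)) (j : Fin n1), M (Sum.inr i) (Sum.inl j) = 0 := by
      intro i j
      rw [hMdef, LinearMap.toMatrix_apply]
      exact repr_inr _ (hfmem _ (hbSV j)) i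
    have hMblocks : M = Matrix.fromBlocks M.toBlocks₁₁ M.toBlocks₁₂ 0 M.toBlocks₂₂ := by
      ext i j
      rcases i with i | i <;> rcases j with j | j
      · rfl
      · rfl
      · exact hM21 i j
      · rfl
    -- the change of basis matrix
    set e := Pi.basisFun ℝ (Fin n) with he
    set J := e.toMatrix b with hJdef
    haveI : Invertible J := e.invertibleToMatrix b
    have hJunit : IsUnit J := isUnit_of_invertible J
    have hJdet : IsUnit J.det := (Matrix.isUnit_iff_isUnit_det J).mp hJunit
    have hJapp : ∀ i j, J i j = b j i := by
      intro i j
      rw [hJdef, Module.Basis.toMatrix_apply, he, Pi.basisFun_repr]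
    have hbapp : ∀ (x : Fin n → ℝ) (i : Fin n), b.repr x i = bS.repr x (σ.symm i) := by
      intro x i
      rw [hb, Module.Basis.repr_reindex_apply]
    have hbv : ∀ j : Fin n, b j = bS (σ.symm j) := by
      intro j; rw [hb, Module.Basis.reindex_apply]
    -- S * J = J * (matrix of f in basis b)
    have hsumrepr : ∀ (x : Fin n → ℝ) (i : Fin n),
        ∑ k : Fin n, b.repr x k * b k i = x i := by
      intro x i
      have hx := b.sum_repr x
      calc ∑ k : Fin n, b.repr x k * b k i = (∑ k : Fin n, b.repr x k • b k) i := by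
            rw [Finset.sum_apply]; rfl
        _ = x i := by rw [hx]
    have hSJ : S * J = J * (LinearMap.toMatrix b b f) := by
      ext i j
      rw [Matrix.mul_apply, Matrix.mul_apply]
      have h1 : ∑ k, S i k * J k j = f (b j) i := by
        rw [hf, Matrix.mulVecLin_apply, Matrix.mulVec, dotProduct]
        exact Finset.sum_congr rfl fun k _ => by rw [hJapp]
      have h2 : ∑ k, J i k * (LinearMap.toMatrix b b f) k j = f (b j) i := by
        calc ∑ k, J i k * (LinearMap.toMatrix b b f) k j
            = ∑ k, b.repr (f (b j)) k * b k i := by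
              refine Finset.sum_congr rfl fun k _ => ?_
              rw [hJapp, LinearMap.toMatrix_apply, mul_comm]
          _ = f (b j) i := hsumrepr _ i
      rw [h1, h2]
    have hTsub : LinearMap.toMatrix b b f = M.submatrix σ.symm σ.symm := by
      ext i j
      rw [LinearMap.toMatrix_apply, Matrix.submatrix_apply, hMdef, LinearMap.toMatrix_apply,
        hbapp, hbv]
    have hJinvJ : J⁻¹ * J = 1 := Matrix.nonsing_inv_mul J hJdet
    -- the blocks
    refine ⟨J, M.toBlocks₁₁, M.toBlocks₁₂, M.toBlocks₂₂,
      Matrix.of fun i c => bS.repr (Dᵀ c) (Sum.inl i), hJunit, ?_, ?_, ?_⟩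
    · rw [mul_assoc, hSJ, ← mul_assoc, hJinvJ, Matrix.one_mul, hTsub, ← hMblocks]
    · -- J⁻¹ * D
      set Dt := Matrix.of fun (i : Fin n1) (c : Fin p) => bS.repr (Dᵀ c) (Sum.inl i) with hDt
      set R2 : Matrix (Fin n) (Fin p) ℝ :=
        (Matrix.of (Sum.elim (fun i : Fin n1 => Dt i)
          (fun _ : Fin (n - n1) => (0 : Fin p → ℝ)))).submatrix σ.symm id with hR2
      have hR2app : ∀ i c, R2 i c = bS.repr (Dᵀ c) (σ.symm i) := by
        intro i c
        rw [hR2, Matrix.submatrix_apply, id_eq, Matrix.of_apply]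
        rcases hu : σ.symm i with u | u
        · simp [hDt]
        · simp [(repr_inr _ (hd c) u).symm]
      have hDJ : D = J * R2 := by
        ext i c
        rw [Matrix.mul_apply]
        symm
        calc ∑ k, J i k * R2 k c
            = ∑ k, bS.repr (Dᵀ c) (σ.symm k) * bS (σ.symm k) i := by
              refine Finset.sum_congr rfl fun k _ => ?_
              rw [hJapp, hR2app, hbv, mul_comm]
          _ = ∑ u : Fin n1 ⊕ Fin (n - n1), bS.repr (Dᵀ c) u * bS u i := by
              exact Fintype.sum_equiv σ.symm _ _ fun k => rfl
          _ = D i c := by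
              have hx := bS.sum_repr (Dᵀ c)
              calc ∑ u, bS.repr (Dᵀ c) u * bS u i
                  = (∑ u, bS.repr (Dᵀ c) u • bS u) i := by rw [Finset.sum_apply]; rfl
                _ = D i c := by rw [hx]; rfl
      rw [hDJ, ← Matrix.mul_assoc, hJinvJ, Matrix.one_mul]
    · -- rank of the reduced controllability matrix
      set Dt := Matrix.of fun (i : Fin n1) (c : Fin p) => bS.repr (Dᵀ c) (Sum.inl i) with hDt
      set f' : V →ₗ[ℝ] V := f.restrict hfmem with hf'
      have hS1 : M.toBlocks₁₁ = LinearMap.toMatrix bV bV f' := by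
        ext i j
        show M (Sum.inl i) (Sum.inl j) = _
        rw [hMdef, LinearMap.toMatrix_apply, LinearMap.toMatrix_apply]
        have h1 : f (bS (Sum.inl j)) = (f' (bV j) : Fin n → ℝ) := by
          rw [hbSl]; rfl
        rw [h1, repr_inl _ (f' (bV j)).2]
      have hdV : ∀ c, Dtᵀ c = ⇑(bV.repr ⟨Dᵀ c, hd c⟩) := by
        intro c
        funext i
        show Dt i c = _
        rw [hDt, Matrix.of_apply, repr_inl _ (hd c)]
      have hpow : ∀ (i : ℕ) (x : V),
          (M.toBlocks₁₁ ^ i).mulVec ⇑(bV.repr x) = ⇑(bV.repr ((f' ^ i) x)) := by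
        intro i
        induction i with
        | zero => intro x; rw [pow_zero, pow_zero, Matrix.one_mulVec]; rfl
        | succ i ih =>
          intro x
          have hstep : M.toBlocks₁₁ *ᵥ ⇑(bV.repr x) = ⇑(bV.repr (f' x)) := by
            rw [hS1]
            exact LinearMap.toMatrix_mulVec_repr bV bV f' x
          rw [pow_succ, ← Matrix.mulVec_mulVec, hstep, ih, pow_succ]
          rfl
      -- columns of ctrb S1 Dt
      set ψ := bV.equivFun with hψ
      have hcoleq : (ctrb M.toBlocks₁₁ Dt)ᵀ = fun ic : Fin n1 × Fin p =>
          ψ ((f' ^ (ic.1 : ℕ)) ⟨Dᵀ ic.2, hd ic.2⟩) := by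
        funext ic
        rw [ctrb_col, mulVecLin_pow, Matrix.mulVecLin_apply, hdV, hpow]
        rw [hψ, Module.Basis.equivFun_apply]
      -- span of the φ'-orbit generators is everything
      have hgtop : Submodule.span ℝ (Set.range fun ic : Fin n1 × Fin p =>
          (f' ^ (ic.1 : ℕ)) ⟨Dᵀ ic.2, hd ic.2⟩) = ⊤ := by
        apply Submodule.map_injective_of_injective V.injective_subtype
        rw [Submodule.map_span, Submodule.map_top, Submodule.range_subtype]
        have himg : V.subtype '' (Set.range fun ic : Fin n1 × Fin p =>
            (f' ^ (ic.1 : ℕ)) ⟨Dᵀ ic.2, hd ic.2⟩) = wSet f s n1 := by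
          ext v
          constructor
          · rintro ⟨w, ⟨⟨i, c⟩, rfl⟩, rfl⟩
            refine ⟨(i : ℕ), i.isLt, Dᵀ c, ⟨c, rfl⟩, ?_⟩
            show V.subtype ((f' ^ (i : ℕ)) ⟨Dᵀ c, hd c⟩) = (f ^ (i : ℕ)) (Dᵀ c)
            rw [hf', Module.End.pow_restrict]
            rfl
          · rintro ⟨i, hi, x, ⟨c, rfl⟩, rfl⟩
            refine ⟨(f' ^ i) ⟨Dᵀ c, hd c⟩, ⟨(⟨i, hi⟩, c), rfl⟩, ?_⟩
            show V.subtype ((f' ^ i) ⟨Dᵀ c, hd c⟩) = (f ^ i) (Dᵀ c)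
            rw [hf', Module.End.pow_restrict]
            rfl
        rw [himg]
        exact hVn1
      rw [rank_ctrb] -- reduce to Wc, then back to span of generators
      rw [← span_pow_cols]
      have hfun2 : (fun ic : Fin n1 × Fin n1 => 0) = 0 := rfl
      have : (fun ic : Fin n1 × Fin p =>
          ((M.toBlocks₁₁).mulVecLin ^ (ic.1 : ℕ)) (Dtᵀ ic.2)) = fun ic : Fin n1 × Fin p =>
          ψ ((f' ^ (ic.1 : ℕ)) ⟨Dᵀ ic.2, hd ic.2⟩) := by
        funext ic
        rw [mulVecLin_pow, Matrix.mulVecLin_apply, hdV, hpow, hψ, Module.Basis.equivFun_apply]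
      rw [this]
      have hrange : Set.range (fun ic : Fin n1 × Fin p =>
          ψ ((f' ^ (ic.1 : ℕ)) ⟨Dᵀ ic.2, hd ic.2⟩)) =
          ⇑ψ '' Set.range (fun ic : Fin n1 × Fin p =>
            (f' ^ (ic.1 : ℕ)) ⟨Dᵀ ic.2, hd ic.2⟩) := by
        rw [← Set.range_comp]; rfl
      rw [hrange]
      rw [show (⇑ψ '' Set.range fun ic : Fin n1 × Fin p =>
          (f' ^ (ic.1 : ℕ)) ⟨Dᵀ ic.2, hd ic.2⟩) = (⇑ψ.toLinearMap '' Set.range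
            fun ic : Fin n1 × Fin p => (f' ^ (ic.1 : ℕ)) ⟨Dᵀ ic.2, hd ic.2⟩) from rfl]
      rw [Submodule.span_image, hgtop, Submodule.map_top, LinearEquiv.range]
      rw [finrank_top, hfr1]
  · -- reverse direction
    rintro ⟨J, S1, S2, S3, Dt, hJu, h1, h2, h3⟩
    have hJdet : IsUnit J.det := (Matrix.isUnit_iff_isUnit_det J).mp hJu
    have hJJ : J⁻¹ * J = 1 := Matrix.nonsing_inv_mul J hJdet
    have hJJ' : J * J⁻¹ = 1 := Matrix.mul_nonsing_inv J hJdet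
    have hJinvdet : IsUnit (J⁻¹).det := Matrix.isUnit_nonsing_inv_det J hJdet
    -- conjugation and powers
    have hconj : ∀ i : ℕ, (J⁻¹ * S * J) ^ i = J⁻¹ * S ^ i * J := by
      intro i; induction i with
      | zero => simp [hJJ]
      | succ i ih =>
        rw [pow_succ, ih, pow_succ]
        have hmid : J * (J⁻¹ * (S * J)) = S * J := by rw [← mul_assoc, hJJ', one_mul]
        calc J⁻¹ * S ^ i * J * (J⁻¹ * S * J)
            = J⁻¹ * (S ^ i * (J * (J⁻¹ * (S * J)))) := by
              simp only [Matrix.mul_assoc]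
          _ = J⁻¹ * (S ^ i * (S * J)) := by rw [hmid]
          _ = J⁻¹ * (S ^ i * S) * J := by simp only [Matrix.mul_assoc]
    have hkey : ∀ a : ℕ, (J⁻¹ * S * J) ^ a * (J⁻¹ * D) = J⁻¹ * (S ^ a * D) := by
      intro a
      rw [hconj]
      calc J⁻¹ * S ^ a * J * (J⁻¹ * D) = J⁻¹ * (S ^ a * ((J * J⁻¹) * D)) := by
            simp only [Matrix.mul_assoc]
        _ = J⁻¹ * (S ^ a * D) := by rw [hJJ', Matrix.one_mul]
    have hctrb : ctrb (J⁻¹ * S * J) (J⁻¹ * D) = J⁻¹ * ctrb S D := by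
      ext i jc
      show ((J⁻¹ * S * J) ^ (jc.1 : ℕ) * (J⁻¹ * D)) i jc.2 = _
      rw [hkey]
      rw [Matrix.mul_apply, Matrix.mul_apply]
      exact Finset.sum_congr rfl fun k _ => rfl
    have hrank1 : (ctrb (J⁻¹ * S * J) (J⁻¹ * D)).rank = (ctrb S D).rank := by
      rw [hctrb, Matrix.rank_mul_eq_right_of_isUnit_det J⁻¹ _ hJinvdet]
    -- compute rank of the block controllability matrix
    set B := Matrix.fromBlocks S1 S2 0 S3 with hB
    have hBpow : ∀ i : ℕ, ∃ B2, B ^ i = Matrix.fromBlocks (S1 ^ i) B2 0 (S3 ^ i) := by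
      intro i; induction i with
      | zero =>
        refine ⟨0, ?_⟩
        rw [pow_zero, pow_zero, pow_zero, ← Matrix.fromBlocks_one]
      | succ i ih =>
        obtain ⟨B2, hB2⟩ := ih
        refine ⟨S1 ^ i * S2 + B2 * S3, ?_⟩
        rw [pow_succ, hB2, hB, Matrix.fromBlocks_multiply]
        rw [pow_succ, pow_succ]
        congr 1 <;> simp
    have hpowsub : ∀ i : ℕ,
        (B.submatrix σ.symm σ.symm) ^ i = (B ^ i).submatrix σ.symm σ.symm := by
      intro i; induction i with
      | zero => rw [pow_zero, pow_zero, Matrix.submatrix_one_equiv]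
      | succ i ih =>
        rw [pow_succ, ih, pow_succ, Matrix.submatrix_mul_equiv]
    set K0 : Matrix (Fin n1 ⊕ Fin (n - n1)) (Fin p) ℝ :=
      Matrix.of (Sum.elim (fun i : Fin n1 => Dt i) (fun _ : Fin (n - n1) => (0 : Fin p → ℝ)))
      with hK0
    have hprod : ∀ i : ℕ, B ^ i * K0 = Matrix.of (Sum.elim
        (fun r : Fin n1 => fun c => (S1 ^ i * Dt) r c)
        (fun _ : Fin (n - n1) => (0 : Fin p → ℝ))) := by
      intro i
      obtain ⟨B2, hB2⟩ := hBpow i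
      ext r c
      rcases r with r | r
      · rw [hB2, Matrix.mul_apply, Fintype.sum_sum_type]
        show (∑ j : Fin n1, (S1 ^ i) r j * K0 (Sum.inl j) c)
          + (∑ j : Fin (n - n1), B2 r j * K0 (Sum.inr j) c) = (S1 ^ i * Dt) r c
        have hz : ∀ j : Fin (n - n1), K0 (Sum.inr j) c = 0 := fun j => rfl
        simp only [hz, mul_zero, Finset.sum_const_zero, add_zero]
        rw [Matrix.mul_apply]
        rfl
      · rw [hB2, Matrix.mul_apply, Fintype.sum_sum_type]
        show (∑ j : Fin n1, (0 : Matrix (Fin (n - n1)) (Fin n1) ℝ) r j * K0 (Sum.inl j) c)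
          + (∑ j : Fin (n - n1), (S3 ^ i) r j * K0 (Sum.inr j) c) = 0
        have hz : ∀ j : Fin (n - n1), K0 (Sum.inr j) c = 0 := fun j => rfl
        simp [hz]
    set padL := ImpulseMat.padL n n1 h.le with hpadL
    have hpadinj : Function.Injective padL := padL_injective n n1 h.le
    have hpadL2 : ∀ (v : Fin n1 → ℝ) (r : Fin n),
        padL v r = Sum.elim v (fun _ => (0 : ℝ)) (σ.symm r) := fun v r => rfl
    -- columns of the block controllability matrix
    have hcols : (ctrb (B.submatrix σ.symm σ.symm) (K0.submatrix σ.symm id))ᵀ =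
        fun ic : Fin n × Fin p =>
          padL ((S1.mulVecLin ^ (ic.1 : ℕ)) (Dtᵀ ic.2)) := by
      funext ic
      obtain ⟨i, c⟩ := ic
      funext r
      show (ctrb (B.submatrix σ.symm σ.symm) (K0.submatrix σ.symm id)) r (i, c) = _
      show ((B.submatrix σ.symm σ.symm) ^ (i : ℕ) * K0.submatrix σ.symm id) r c = _
      rw [hpowsub, show ((B ^ (i : ℕ)).submatrix σ.symm σ.symm * K0.submatrix σ.symm id)
        = (B ^ (i : ℕ) * K0).submatrix σ.symm id from Matrix.submatrix_mul_equiv _ _ _ _ _,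
        Matrix.submatrix_apply, hprod]
      rw [Matrix.of_apply, hpadL2]
      rcases hh : σ.symm r with u | u
      · rw [Sum.elim_inl, Sum.elim_inl]
        show (S1 ^ (i : ℕ) * Dt) u c = (S1.mulVecLin ^ (i : ℕ)) (Dtᵀ c) u
        rw [mulVecLin_pow, Matrix.mulVecLin_apply, Matrix.mul_apply, Matrix.mulVec,
          dotProduct]
        rfl
      · rw [Sum.elim_inr, Sum.elim_inr]
        rfl
    -- assemble
    rw [← hrank1, h1, h2]
    rw [show (Matrix.of (Sum.elim (fun i : Fin n1 => Dt i)
        (fun _ : Fin (n - n1) => (0 : Fin p → ℝ)))).submatrix σ.symm id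
      = K0.submatrix σ.symm id from rfl]
    rw [show (Matrix.fromBlocks S1 S2 0 S3).submatrix σ.symm σ.symm
      = B.submatrix σ.symm σ.symm from rfl]
    rw [Matrix.rank_eq_finrank_span_cols, Matrix.col, hcols]
    have hrange2 : Set.range (fun ic : Fin n × Fin p =>
        padL ((S1.mulVecLin ^ (ic.1 : ℕ)) (Dtᵀ ic.2))) =
        ⇑padL '' Set.range (fun ic : Fin n × Fin p =>
          (S1.mulVecLin ^ (ic.1 : ℕ)) (Dtᵀ ic.2)) := by
      rw [← Set.range_comp]; rfl
    rw [hrange2, Submodule.span_image, span_pow_cols]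
    have hWcn : Wc S1.mulVecLin (Set.range Dtᵀ) n = Wc S1.mulVecLin (Set.range Dtᵀ) n1 := by
      rw [Wc_ge S1.mulVecLin (Set.range Dtᵀ) (m := n) (by rw [hfr1]; exact h.le), hfr1]
    rw [hWcn]
    have := (Submodule.equivMapOfInjective padL hpadinj
      (Wc S1.mulVecLin (Set.range Dtᵀ) n1)).finrank_eq
    rw [← this]
    rw [rank_ctrb] at h3
    exact h3

end ImpulseMat
end
end

section
/- Half-plane rank condition forces the uncontrollable block spectrum into the complementary half-plane. Let n, p ∈ ℕ⁺, S ∈ ℝ^{n×n}, D ∈ ℝ^{n×p}, β ∈ ℝ and n_1 ∈ ℕ⁺ with n_1 < n. Suppose J ∈ ℝ^{n×n} is invertible and J⁻¹SJ = [[S_1, S_2],[0, S_3]] in block form with S_1 ∈ ℝ^{n_1×n_1}, S_3 ∈ ℝ^{(n−n_1)×(n−n_1)}, and J⁻¹D = [D̃; 0] with D̃ ∈ ℝ^{n_1×p}. If rank(λI_n − S, D) = n for every λ ∈ ℂ with Re(λ) ≥ β, then every eigenvalue λ of S_3 satisfies Re(λ) < β. -/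
noncomputable section

namespace ImpulseMat

open Matrix

/-- the Hautus matrix `(λ Iₙ - S, D)` over `ℂ`. -/
def hautus {n p : ℕ} (S : Matrix (Fin n) (Fin n) ℝ) (D : Matrix (Fin n) (Fin p) ℝ)
    (lam : ℂ) : Matrix (Fin n) (Fin n ⊕ Fin p) ℂ :=
  Matrix.of fun i jc =>
    Sum.elim (fun j => (lam • (1 : Matrix (Fin n) (Fin n) ℂ) - cplx S) i j)
      (fun c => (cplx D) i c) jc

/-- auxiliary: `v ᵥ* (a • 1) = a • v`. -/
lemma vecMul_smul_one {k : ℕ} (a : ℂ) (v : Fin k → ℂ) :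
    v ᵥ* (a • (1 : Matrix (Fin k) (Fin k) ℂ)) = a • v := by
  funext i
  simp [Matrix.vecMul, dotProduct, Matrix.one_apply, mul_ite, mul_comm]

/-- The Hautus-type rank condition on the half-plane `Re λ ≥ β` forces the spectrum of the
uncontrollable block `S3` into the half-plane `Re λ < β`. -/
theorem uncontrollable_block_spectrum
    {n p : ℕ} (hp : 0 < p) (n1 : ℕ) (hn1 : 1 ≤ n1) (h : n1 < n) (β : ℝ)
    (S : Matrix (Fin n) (Fin n) ℝ) (D : Matrix (Fin n) (Fin p) ℝ)
    (J : Matrix (Fin n) (Fin n) ℝ) (S1 : Matrix (Fin n1) (Fin n1) ℝ)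
    (S2 : Matrix (Fin n1) (Fin (n - n1)) ℝ)
    (S3 : Matrix (Fin (n - n1)) (Fin (n - n1)) ℝ)
    (Dt : Matrix (Fin n1) (Fin p) ℝ)
    (hJ : IsUnit J)
    (hS : J⁻¹ * S * J =
      (Matrix.fromBlocks S1 S2 0 S3).submatrix
        (sumFinEquiv n n1 h.le).symm (sumFinEquiv n n1 h.le).symm)
    (hD : J⁻¹ * D =
      (Matrix.of (Sum.elim (fun i : Fin n1 => Dt i)
        (fun _ : Fin (n - n1) => (0 : Fin p → ℝ)))).submatrix
          (sumFinEquiv n n1 h.le).symm id)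
    (hrank : ∀ lam : ℂ, β ≤ lam.re → (hautus S D lam).rank = n) :
    ∀ lam ∈ spectrum ℂ (cplx S3), lam.re < β := by
  intro lam hlam
  by_contra hge
  push_neg at hge
  have hrk := hrank lam hge
  set e := sumFinEquiv n n1 h.le with he
  -- obtain a left eigenvector of cplx S3
  have hnu : ¬ IsUnit (algebraMap ℂ (Matrix (Fin (n - n1)) (Fin (n - n1)) ℂ) lam - cplx S3) :=
    spectrum.mem_iff.mp hlam
  have hdet : (lam • (1 : Matrix (Fin (n - n1)) (Fin (n - n1)) ℂ) - cplx S3).det = 0 := by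
    by_contra hd
    exact hnu (by
      have hu : IsUnit (lam • (1 : Matrix (Fin (n - n1)) (Fin (n - n1)) ℂ) - cplx S3) :=
        (Matrix.isUnit_iff_isUnit_det _).mpr (Ne.isUnit hd)
      simpa [Algebra.algebraMap_eq_smul_one] using hu)
  obtain ⟨w, hw0, hw⟩ := Matrix.exists_vecMul_eq_zero_iff.mpr hdet
  have hwS3 : w ᵥ* cplx S3 = lam • w := by
    have h1 : w ᵥ* (lam • (1 : Matrix (Fin (n - n1)) (Fin (n - n1)) ℂ)) - w ᵥ* cplx S3 = 0 := by
      rw [← Matrix.vecMul_sub]; exact hw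
    have h2 : w ᵥ* (lam • (1 : Matrix (Fin (n - n1)) (Fin (n - n1)) ℂ)) = lam • w :=
      vecMul_smul_one lam w
    rw [h2] at h1
    exact (sub_eq_zero.mp h1).symm
  -- complexified invertibility facts
  have hdJ : IsUnit J.det := (Matrix.isUnit_iff_isUnit_det J).mp hJ
  have hJJ : cplx J⁻¹ * cplx J = 1 := by
    rw [cplx, cplx, ← Matrix.map_mul, Matrix.nonsing_inv_mul J hdJ]
    simp [Matrix.map_one]
  have hJJ' : cplx J * cplx J⁻¹ = 1 := by
    rw [cplx, cplx, ← Matrix.map_mul, Matrix.mul_nonsing_inv J hdJ]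
    simp [Matrix.map_one]
  -- the transformed system over ℂ
  have hSc : cplx J⁻¹ * cplx S * cplx J =
      (Matrix.fromBlocks (cplx S1) (cplx S2) 0 (cplx S3)).submatrix e.symm e.symm := by
    have hc := congrArg (fun M : Matrix (Fin n) (Fin n) ℝ => M.map (algebraMap ℝ ℂ)) hS
    simp only [Matrix.map_mul, ← Matrix.submatrix_map, Matrix.fromBlocks_map,
      Matrix.map_zero _ (map_zero (algebraMap ℝ ℂ))] at hc
    exact hc
  have hDc : cplx J⁻¹ * cplx D =
      ((Matrix.of (Sum.elim (fun i : Fin n1 => Dt i)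
        (fun _ : Fin (n - n1) => (0 : Fin p → ℝ)))).map (algebraMap ℝ ℂ)).submatrix
          e.symm id := by
    have hc := congrArg (fun M : Matrix (Fin n) (Fin p) ℝ => M.map (algebraMap ℝ ℂ)) hD
    simp only [Matrix.map_mul, ← Matrix.submatrix_map] at hc
    exact hc
  -- the left eigenvector of S
  set u : Fin n1 ⊕ Fin (n - n1) → ℂ := Sum.elim 0 w with hu
  set u' : Fin n → ℂ := u ∘ e.symm with hu'
  set v : Fin n → ℂ := u' ᵥ* cplx J⁻¹ with hv
  have hue : u' ∘ e.symm.symm = u := by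
    funext s; simp [hu']
  have huT : u' ᵥ* ((Matrix.fromBlocks (cplx S1) (cplx S2) 0 (cplx S3)).submatrix
      e.symm e.symm) = lam • u' := by
    rw [Matrix.submatrix_vecMul_equiv, hue, Matrix.vecMul_fromBlocks]
    have hl : u ∘ Sum.inl = 0 := by funext j; simp [hu]
    have hr : u ∘ Sum.inr = w := by funext j; simp [hu]
    rw [hl, hr]
    funext i
    simp only [Function.comp_apply, Pi.smul_apply, hu', Function.comp_apply]
    rcases hsi : e.symm i with a | b <;> simp [hu, hwS3]
  have hvS : v ᵥ* cplx S = lam • v := by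
    have key : cplx J⁻¹ * cplx S =
        (cplx J⁻¹ * cplx S * cplx J) * cplx J⁻¹ := by
      rw [Matrix.mul_assoc (cplx J⁻¹ * cplx S), hJJ', Matrix.mul_one]
    rw [hv, Matrix.vecMul_vecMul, key, hSc, ← Matrix.vecMul_vecMul, huT,
      Matrix.smul_vecMul]
  have hvD : v ᵥ* cplx D = 0 := by
    rw [hv, Matrix.vecMul_vecMul, hDc, Matrix.submatrix_vecMul_equiv, hue]
    funext c
    simp [Matrix.vecMul, dotProduct, Fintype.sum_sum_type, hu]
  have hvne : v ≠ 0 := by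
    intro hv0
    have hu'0 : u' = 0 := by
      have h1 : u' ᵥ* (cplx J⁻¹ * cplx J) = 0 := by
        rw [← Matrix.vecMul_vecMul, ← hv, hv0, Matrix.zero_vecMul]
      rwa [hJJ, Matrix.vecMul_one] at h1
    obtain ⟨j, hj⟩ := Function.ne_iff.mp hw0
    apply hj
    have : u' (e (Sum.inr j)) = 0 := by rw [hu'0]; rfl
    simpa [hu', hu] using this
  -- v is a left null vector of the Hautus matrix
  have hH : v ᵥ* hautus S D lam = 0 := by
    funext jc
    cases jc with
    | inl j =>
      have h1 : (v ᵥ* hautus S D lam) (Sum.inl j) =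
          (v ᵥ* (lam • (1 : Matrix (Fin n) (Fin n) ℂ) - cplx S)) j := by
        simp [hautus, Matrix.vecMul, dotProduct]
      rw [h1, Matrix.vecMul_sub, vecMul_smul_one, hvS]
      simp
    | inr c =>
      have h1 : (v ᵥ* hautus S D lam) (Sum.inr c) = (v ᵥ* cplx D) c := by
        simp [hautus, Matrix.vecMul, dotProduct]
      rw [h1, hvD]
      rfl
  -- rank contradiction
  have hT : (hautus S D lam)ᵀ *ᵥ v = 0 := by
    rw [Matrix.mulVec_transpose, hH]
  have hker : 0 < Module.finrank ℂ
      (LinearMap.ker ((hautus S D lam)ᵀ.mulVecLin)) := by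
    have hmem : v ∈ LinearMap.ker ((hautus S D lam)ᵀ.mulVecLin) := by
      exact LinearMap.mem_ker.mpr hT
    have : Nontrivial (LinearMap.ker ((hautus S D lam)ᵀ.mulVecLin)) :=
      nontrivial_of_ne ⟨v, hmem⟩ 0 (by simpa [Subtype.ext_iff] using hvne)
    exact Module.finrank_pos
  have hsum := LinearMap.finrank_range_add_finrank_ker ((hautus S D lam)ᵀ.mulVecLin)
  have hdom : Module.finrank ℂ (Fin n → ℂ) = n := by simp
  have hrT : (hautus S D lam)ᵀ.rank = (hautus S D lam).rank :=
    Matrix.rank_transpose _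
  rw [Matrix.rank] at hrT
  rw [hdom] at hsum
  rw [hrT, hrk] at hsum
  omega


end ImpulseMat
end
end
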